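/- arXiv:1302.2137 — 12 statements merged into one kernel-verified Lean document; each statement's English description precedes it below -/
import Mathlib

section
/- Let w ∈ ℝ_{≥0}^n and let 1 ≤ k ≤ n be an integer such that at least k of the entries w_i are strictly positive. Then there exists τ > 0 such that Σ_{i=1}^n min{1, w_i/τ} = k, and the resulting probability vector p with p_i = min{1, w_i/τ} is the same for every τ > 0 satisfying this equation (i.e., the PPS probabilities are well defined). -/
/-!
Each term `τ ↦ min 1 (w i / τ)` is continuous and antitone on `(0, ∞)`. At `τ` equal to the
smallest positive weight every positive weight contributes `1`, so the sum is at least `k`; once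
`τ ≥ ∑ i, w i` the sum is at most `1 ≤ k`. The intermediate value theorem gives existence. For
uniqueness, if `τ ≤ τ'` then every term at `τ'` is at most the term at `τ`, so equal sums force
equal terms.
-/

open Finset

section PPS

variable {ι : Type*} [Fintype ι] {w : ι → ℝ}

theorem min_one_div_eq_of_sum_eq (hw : ∀ i, 0 ≤ w i) {τ τ' : ℝ} (hτ : 0 < τ) (hle : τ ≤ τ')
    (hsum : ∑ i, min 1 (w i / τ) = ∑ i, min 1 (w i / τ')) (i : ι) :
    min 1 (w i / τ) = min 1 (w i / τ') := by
  have hterm : ∀ j ∈ univ, min 1 (w j / τ') ≤ min 1 (w j / τ) := fun j _ => by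
    gcongr
    exact hw j
  exact ((sum_eq_sum_iff_of_le hterm).mp hsum.symm i (mem_univ i)).symm

theorem continuousOn_sum_min_one_div (w : ι → ℝ) :
    ContinuousOn (fun τ => ∑ i, min 1 (w i / τ)) (Set.Ioi 0) :=
  continuousOn_finsetSum _ fun _ _ =>
    continuousOn_const.inf (continuousOn_const.div continuousOn_id fun _ hτ => hτ.ne')

theorem card_filter_pos_le_sum_min_one_div (hw : ∀ i, 0 ≤ w i) {τ : ℝ} (hτ : 0 < τ)
    (hτw : ∀ i, 0 < w i → τ ≤ w i) :
    ((univ.filter fun i => 0 < w i).card : ℝ) ≤ ∑ i, min 1 (w i / τ) := by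
  have hone : ∀ i ∈ univ.filter fun i => 0 < w i, min 1 (w i / τ) = 1 := fun i hi =>
    min_eq_left ((one_le_div hτ).mpr (hτw i (mem_filter.mp hi).2))
  calc ((univ.filter fun i => 0 < w i).card : ℝ)
      = ∑ i ∈ univ.filter fun i => 0 < w i, min 1 (w i / τ) := by
        rw [sum_congr rfl hone, sum_const, nsmul_one]
    _ ≤ ∑ i, min 1 (w i / τ) :=
        sum_le_sum_of_subset_of_nonneg (filter_subset _ _) fun i _ _ =>
          le_min zero_le_one (div_nonneg (hw i) hτ.le)

theorem sum_min_one_div_le_one {τ : ℝ} (hτ : 0 < τ) (hτw : ∑ i, w i ≤ τ) :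
    ∑ i, min 1 (w i / τ) ≤ 1 :=
  calc ∑ i, min 1 (w i / τ) ≤ ∑ i, w i / τ := sum_le_sum fun _ _ => min_le_right _ _
    _ = (∑ i, w i) / τ := (sum_div _ _ _).symm
    _ ≤ 1 := (div_le_one hτ).mpr hτw

theorem exists_sum_min_one_div_eq (hw : ∀ i, 0 ≤ w i) {k : ℕ} (hk : 1 ≤ k)
    (hpos : k ≤ (univ.filter fun i => 0 < w i).card) :
    ∃ τ : ℝ, 0 < τ ∧ ∑ i, min 1 (w i / τ) = (k : ℝ) := by
  set S := univ.filter fun i => 0 < w i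
  have hS : S.Nonempty := card_pos.mp (hk.trans hpos)
  set a := S.inf' hS w
  have ha : 0 < a := (lt_inf'_iff hS).mpr fun i hi => (mem_filter.mp hi).2
  set b := a + ∑ i, w i
  have hab : a ≤ b := le_add_of_nonneg_right (sum_nonneg fun i _ => hw i)
  have hk_le_a : (k : ℝ) ≤ ∑ i, min 1 (w i / a) :=
    calc (k : ℝ) ≤ S.card := by exact_mod_cast hpos
      _ ≤ _ := card_filter_pos_le_sum_min_one_div hw ha fun i hi =>
        inf'_le w (mem_filter.mpr ⟨mem_univ i, hi⟩)
  have hb_le_k : ∑ i, min 1 (w i / b) ≤ k :=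
    (sum_min_one_div_le_one (ha.trans_le hab) (le_add_of_nonneg_left ha.le)).trans
      (by exact_mod_cast hk)
  obtain ⟨τ, hτ, hτk⟩ := intermediate_value_Icc' hab
    ((continuousOn_sum_min_one_div w).mono fun _ hτ => ha.trans_le hτ.1) ⟨hb_le_k, hk_le_a⟩
  exact ⟨τ, ha.trans_le hτ.1, hτk⟩

end PPS

theorem pps_well_defined_general (n k : ℕ) (w : Fin n → ℝ) (hw : ∀ i, 0 ≤ w i)
    (hk1 : 1 ≤ k)
    (hpos : k ≤ (Finset.univ.filter fun i => 0 < w i).card) :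
    (∃ τ : ℝ, 0 < τ ∧ ∑ i, min 1 (w i / τ) = (k : ℝ)) ∧
      ∀ τ τ' : ℝ, 0 < τ → 0 < τ' →
        (∑ i, min 1 (w i / τ) = (k : ℝ)) → (∑ i, min 1 (w i / τ') = (k : ℝ)) →
        ∀ i, min 1 (w i / τ) = min 1 (w i / τ') := by
  refine ⟨exists_sum_min_one_div_eq hw hk1 hpos, fun τ τ' hτ hτ' hsum hsum' i => ?_⟩
  rcases le_total τ τ' with hle | hle
  · exact min_one_div_eq_of_sum_eq hw hτ hle (hsum.trans hsum'.symm) i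
  · exact (min_one_div_eq_of_sum_eq hw hτ' hle (hsum'.trans hsum.symm) i).symm

/-- **PPS probabilities are well defined.**
For `w ∈ ℝ_{≥0}^n` and `1 ≤ k ≤ n` with at least `k` strictly positive entries,
there exists `τ > 0` with `∑ i, min 1 (w i / τ) = k`, and the probability
vector `p i = min 1 (w i / τ)` is the same for every such `τ > 0`. -/
theorem pps_well_defined (n k : ℕ) (w : Fin n → ℝ) (hw : ∀ i, 0 ≤ w i)
    (hk1 : 1 ≤ k) (hkn : k ≤ n)
    (hpos : k ≤ (Finset.univ.filter fun i => 0 < w i).card) :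
    (∃ τ : ℝ, 0 < τ ∧ ∑ i, min 1 (w i / τ) = (k : ℝ)) ∧
      ∀ τ τ' : ℝ, 0 < τ → 0 < τ' →
        (∑ i, min 1 (w i / τ) = (k : ℝ)) → (∑ i, min 1 (w i / τ') = (k : ℝ)) →
        ∀ i, min 1 (w i / τ) = min 1 (w i / τ') :=
  pps_well_defined_general n k w hw hk1 hpos
end

section
/- Let w ∈ ℝ_{≥0}^n have at least k strictly positive entries, where 1 ≤ k ≤ n, and let p = pps(k,w). Then for every q ∈ [0,1]^n with Σ_i q_i = k and with q_i > 0 whenever w_i > 0, one has Σ_{i: w_i>0} w_i²/p_i ≤ Σ_{i: w_i>0} w_i²/q_i. That is, the PPS distribution minimizes the sum of Horvitz–Thompson variances among all sampling-probability vectors of expected sample size k. -/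
lemma pps_pointwise (w q τ : ℝ) (hw : 0 < w) (hq : 0 < q) (hq1 : q ≤ 1) (hτ : 0 < τ) :
    w ^ 2 / min 1 (w / τ) ≤ w ^ 2 / q + τ ^ 2 * (q - min 1 (w / τ)) := by
  rcases le_or_gt (w / τ) 1 with h | h
  · rw [min_eq_right h]
    have key : w ^ 2 / q + τ ^ 2 * (q - w / τ) - w ^ 2 / (w / τ) = (w - τ * q) ^ 2 / q := by
      field_simp
      ring
    have h2 : (0:ℝ) ≤ (w - τ * q) ^ 2 / q := div_nonneg (sq_nonneg _) hq.le
    linarith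
  · rw [min_eq_left h.le]
    have hτw : τ ≤ w := ((one_lt_div hτ).mp h).le
    have key : w ^ 2 / q + τ ^ 2 * (q - 1) - w ^ 2 / 1 = (1 - q) * (w ^ 2 - τ ^ 2 * q) / q := by
      field_simp
      ring
    have h1 : (0:ℝ) ≤ (1 - q) * (w ^ 2 - τ ^ 2 * q) / q := by
      apply div_nonneg _ hq.le
      apply mul_nonneg (by linarith)
      nlinarith
    linarith

/-- **PPS minimizes the sum of Horvitz–Thompson variances.**
Let `w ∈ ℝ_{≥0}^n` have at least `k` strictly positive entries, `1 ≤ k ≤ n`,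
and let `p = pps(k,w)` (given via a threshold `τ > 0` with `∑ i, min 1 (w i/τ) = k`).
Then for every `q ∈ [0,1]^n` with `∑ q = k` and `q i > 0` whenever `w i > 0`,
`∑_{i : w i > 0} w i ^ 2 / p i ≤ ∑_{i : w i > 0} w i ^ 2 / q i`. -/
theorem pps_minimizes_variance (n k : ℕ) (w : Fin n → ℝ) (hw : ∀ i, 0 ≤ w i)
    (hk1 : 1 ≤ k) (hkn : k ≤ n)
    (hpos : k ≤ (Finset.univ.filter fun i => 0 < w i).card)
    (τ : ℝ) (hτ : 0 < τ) (hτk : ∑ i, min 1 (w i / τ) = (k : ℝ))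
    (q : Fin n → ℝ) (hq0 : ∀ i, 0 ≤ q i) (hq1 : ∀ i, q i ≤ 1)
    (hqk : ∑ i, q i = (k : ℝ)) (hqpos : ∀ i, 0 < w i → 0 < q i) :
    ∑ i ∈ Finset.univ.filter (fun i => 0 < w i), w i ^ 2 / min 1 (w i / τ) ≤
      ∑ i ∈ Finset.univ.filter (fun i => 0 < w i), w i ^ 2 / q i := by
  set S := Finset.univ.filter (fun i => 0 < w i) with hS
  have hmemS : ∀ i ∈ S, 0 < w i := fun i hi => (Finset.mem_filter.mp hi).2
  have step : ∑ i ∈ S, w i ^ 2 / min 1 (w i / τ) ≤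
      ∑ i ∈ S, (w i ^ 2 / q i + τ ^ 2 * (q i - min 1 (w i / τ))) := by
    apply Finset.sum_le_sum
    intro i hi
    exact pps_pointwise (w i) (q i) τ (hmemS i hi) (hqpos i (hmemS i hi)) (hq1 i) hτ
  have hsum : ∑ i ∈ S, (w i ^ 2 / q i + τ ^ 2 * (q i - min 1 (w i / τ))) =
      ∑ i ∈ S, w i ^ 2 / q i + τ ^ 2 * (∑ i ∈ S, q i - ∑ i ∈ S, min 1 (w i / τ)) := by
    rw [Finset.sum_add_distrib]
    congr 1
    rw [← Finset.sum_sub_distrib, Finset.mul_sum]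
  have hpS : ∑ i ∈ S, min 1 (w i / τ) = (k : ℝ) := by
    rw [← hτk]
    apply Finset.sum_subset (Finset.subset_univ S)
    intro i _ hi
    have : w i = 0 := by
      by_contra hne
      exact hi (Finset.mem_filter.mpr ⟨Finset.mem_univ i, lt_of_le_of_ne (hw i) (Ne.symm hne)⟩)
    simp [this, le_of_lt hτ]
  have hqS : ∑ i ∈ S, q i ≤ (k : ℝ) := by
    rw [← hqk]
    exact Finset.sum_le_sum_of_subset_of_nonneg (Finset.subset_univ S) (fun i _ _ => hq0 i)
  have hnp : τ ^ 2 * (∑ i ∈ S, q i - ∑ i ∈ S, min 1 (w i / τ)) ≤ 0 := by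
    apply mul_nonpos_of_nonneg_of_nonpos (sq_nonneg τ)
    rw [hpS]; linarith
  linarith [step, hsum.le, hsum.ge]
end

section
/- Let w ∈ ℝ^n with w_i > 0 for all i, let p ∈ [0,1]^n, and let x ∈ (0, Σ_{i}(1 − p_i)]. Then there exists a threshold y > 0 such that the vector δ defined by δ_i = min{1, max{p_i, w_i/y}} − p_i satisfies Σ_i δ_i = x, and δ is the unique minimizer of Σ_i w_i²/(p_i + δ_i) over all δ ∈ ℝ^n satisfying 0 ≤ δ_i ≤ 1 − p_i for every i and Σ_i δ_i = x. -/
/-!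
The objective `∑ w i ^ 2 / r i` is strictly convex in `r`, so a feasible point satisfying the
Lagrange (KKT) conditions is its unique minimizer on the feasible set. The clipped vector
`min 1 (max (p i) (w i / y))` satisfies them with multiplier `y ^ 2`, and its total mass is
continuous in `y > 0`, equals `n` for small `y` and is at most `∑ p i + x` for large `y`;
the intermediate value theorem picks the threshold.
-/

open Finset

section

variable {ι : Type*}

lemma exists_pos_forall_le_of_pos [Finite ι] {w : ι → ℝ} (hw : ∀ i, 0 < w i) :
    ∃ y : ℝ, 0 < y ∧ ∀ i, y ≤ w i := by
  obtain ⟨M, hM⟩ := Finite.exists_le fun i => (w i)⁻¹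
  refine ⟨(|M| + 1)⁻¹, by positivity, fun i => ?_⟩
  rw [inv_le_comm₀ (by positivity) (hw i)]
  exact (hM i).trans ((le_abs_self M).trans (le_add_of_nonneg_right zero_le_one))

noncomputable def thresholdProb (p w : ι → ℝ) (y : ℝ) (i : ι) : ℝ := min 1 (max (p i) (w i / y))

variable {p w : ι → ℝ} {y : ℝ} {i : ι}

lemma thresholdProb_pos (hy : 0 < y) (hw : 0 < w i) : 0 < thresholdProb p w y i :=
  lt_min one_pos (lt_max_of_lt_right (div_pos hw hy))

lemma thresholdProb_eq_one (hy : 0 < y) (hyw : y ≤ w i) : thresholdProb p w y i = 1 :=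
  min_eq_left (le_max_of_le_right ((one_le_div hy).mpr hyw))

lemma thresholdProb_le_add (hy : 0 < y) (hp : 0 ≤ p i) (hw : 0 ≤ w i) :
    thresholdProb p w y i ≤ p i + w i / y :=
  (min_le_right _ _).trans
    (max_le (le_add_of_nonneg_right (div_nonneg hw hy.le)) (le_add_of_nonneg_left hp))

lemma continuousOn_sum_thresholdProb [Fintype ι] :
    ContinuousOn (fun y => ∑ i, thresholdProb p w y i) (Set.Ioi 0) := by
  unfold thresholdProb
  fun_prop (disch := exact fun y hy => (Set.mem_Ioi.mp hy).ne')

lemma exists_sum_thresholdProb_eq [Fintype ι] (hw : ∀ i, 0 < w i) (hp : ∀ i, 0 ≤ p i) {s : ℝ}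
    (hs₀ : ∑ i, p i < s) (hs₁ : s ≤ Fintype.card ι) :
    ∃ y, 0 < y ∧ ∑ i, thresholdProb p w y i = s := by
  obtain ⟨y₀, hy₀, hy₀w⟩ := exists_pos_forall_le_of_pos hw
  have hgap : 0 < s - ∑ i, p i := sub_pos.mpr hs₀
  have hW : 0 ≤ ∑ i, w i := sum_nonneg fun i _ => (hw i).le
  set y₁ := (∑ i, w i) / (s - ∑ i, p i) + 1
  have hy₁ : 0 < y₁ := by positivity
  have h₀ : ∑ i, thresholdProb p w y₀ i = Fintype.card ι := by
    simp [thresholdProb_eq_one hy₀ (hy₀w _)]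
  have h₁ : ∑ i, thresholdProb p w y₁ i ≤ s := calc
    ∑ i, thresholdProb p w y₁ i ≤ ∑ i, (p i + w i / y₁) :=
      sum_le_sum fun i _ => thresholdProb_le_add hy₁ (hp i) (hw i).le
    _ = ∑ i, p i + (∑ i, w i) / y₁ := by rw [sum_add_distrib, sum_div]
    _ ≤ s := by
      have : (∑ i, w i) / y₁ ≤ s - ∑ i, p i := by
        rw [div_le_iff₀ hy₁]
        simp only [y₁, mul_add, mul_div_cancel₀ _ hgap.ne']
        linarith
      linarith
  obtain ⟨y, hy, hys⟩ := isPreconnected_Ioi.intermediate_value hy₁ hy₀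
    continuousOn_sum_thresholdProb ⟨h₁, h₀ ▸ hs₁⟩
  exact ⟨y, hy, hys⟩

/-- The KKT condition with multiplier `y ^ 2`: each coordinate is either clipped to a bound of
`[p i, 1]`, where `r - thresholdProb` has a fixed sign, or equals the stationary point `w i / y`. -/
lemma sub_mul_sq_div_thresholdProb_sq_le (hy : 0 < y) (hw : 0 < w i) (hp : p i ≤ 1) {r : ℝ}
    (hpr : p i ≤ r) (hr : r ≤ 1) :
    (r - thresholdProb p w y i) * (w i ^ 2 / thresholdProb p w y i ^ 2) ≤
      (r - thresholdProb p w y i) * y ^ 2 := by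
  unfold thresholdProb
  rcases le_total (w i / y) (p i) with hwp | hpw
  · rw [max_eq_left hwp, min_eq_right hp]
    have hp₀ : 0 < p i := (div_pos hw hy).trans_le hwp
    have hwp' : w i ≤ p i * y := (div_le_iff₀ hy).mp hwp
    have : w i ^ 2 / p i ^ 2 ≤ y ^ 2 := by
      rw [div_le_iff₀ (by positivity)]
      nlinarith
    exact mul_le_mul_of_nonneg_left this (by linarith)
  rcases le_total (w i / y) 1 with hw1 | hw1
  · rw [max_eq_right hpw, min_eq_right hw1, div_pow, div_div_eq_mul_div,
      mul_div_cancel_left₀ _ (pow_ne_zero 2 hw.ne')]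
  · rw [min_eq_left (le_max_of_le_right hw1), one_pow, div_one]
    have : y ≤ w i := (one_le_div hy).mp hw1
    exact mul_le_mul_of_nonpos_left (by nlinarith) (by linarith)

variable [Fintype ι] {q r : ι → ℝ} {c : ℝ}

/-- The excess of `∑ w² / r` over `∑ w² / q` splits into the first-order term, which the
Lagrange condition at `q` makes nonpositive, and a nonnegative second-order remainder. -/
lemma sum_sq_div_add_sum_le_of_lagrange (hq : ∀ i, 0 < q i) (hr : ∀ i, 0 < r i)
    (hsum : ∑ i, r i = ∑ i, q i)
    (hlag : ∀ i, (r i - q i) * (w i ^ 2 / q i ^ 2) ≤ (r i - q i) * c) :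
    ∑ i, w i ^ 2 / q i + ∑ i, w i ^ 2 * (r i - q i) ^ 2 / (r i * q i ^ 2) ≤
      ∑ i, w i ^ 2 / r i := by
  have hsplit : ∀ i, w i ^ 2 / r i = w i ^ 2 / q i - (r i - q i) * (w i ^ 2 / q i ^ 2) +
      w i ^ 2 * (r i - q i) ^ 2 / (r i * q i ^ 2) := fun i => by
    field_simp [(hq i).ne', (hr i).ne']
    ring
  have hfirst : ∑ i, (r i - q i) * (w i ^ 2 / q i ^ 2) ≤ 0 := calc
    _ ≤ ∑ i, (r i - q i) * c := sum_le_sum fun i _ => hlag i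
    _ = 0 := by rw [← sum_mul, sum_sub_distrib, hsum, sub_self, zero_mul]
  rw [sum_congr rfl fun i _ => hsplit i, sum_add_distrib, sum_sub_distrib]
  linarith

lemma sum_sq_div_le_of_lagrange (hw : ∀ i, w i ≠ 0) (hq : ∀ i, 0 < q i) (hr : ∀ i, 0 < r i)
    (hsum : ∑ i, r i = ∑ i, q i)
    (hlag : ∀ i, (r i - q i) * (w i ^ 2 / q i ^ 2) ≤ (r i - q i) * c) :
    ∑ i, w i ^ 2 / q i ≤ ∑ i, w i ^ 2 / r i ∧
      (∑ i, w i ^ 2 / r i = ∑ i, w i ^ 2 / q i → r = q) := by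
  have hkey := sum_sq_div_add_sum_le_of_lagrange hq hr hsum hlag
  have hrem : ∀ i ∈ univ, 0 ≤ w i ^ 2 * (r i - q i) ^ 2 / (r i * q i ^ 2) := fun i _ => by
    have := hr i
    positivity
  refine ⟨by linarith [sum_nonneg hrem], fun heq => funext fun i => ?_⟩
  have hi := (sum_eq_zero_iff_of_nonneg hrem).mp
    (le_antisymm (by linarith) (sum_nonneg hrem)) i (mem_univ i)
  simpa [hw i, (hr i).ne', (hq i).ne', sub_eq_zero] using hi

lemma sum_ofReal_sq_div_le_of_lagrange (hw : ∀ i, w i ≠ 0) (hq : ∀ i, 0 < q i)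
    (hr : ∀ i, 0 ≤ r i) (hsum : ∑ i, r i = ∑ i, q i)
    (hlag : ∀ i, (r i - q i) * (w i ^ 2 / q i ^ 2) ≤ (r i - q i) * c) :
    ∑ i, ENNReal.ofReal (w i ^ 2) / ENNReal.ofReal (q i) ≤
        ∑ i, ENNReal.ofReal (w i ^ 2) / ENNReal.ofReal (r i) ∧
      (∑ i, ENNReal.ofReal (w i ^ 2) / ENNReal.ofReal (r i) =
          ∑ i, ENNReal.ofReal (w i ^ 2) / ENNReal.ofReal (q i) → r = q) := by
  have hofReal {v : ι → ℝ} (hv : ∀ i, 0 < v i) :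
      ∑ i, ENNReal.ofReal (w i ^ 2) / ENNReal.ofReal (v i) =
        ENNReal.ofReal (∑ i, w i ^ 2 / v i) := by
    rw [ENNReal.ofReal_sum_of_nonneg fun i _ => div_nonneg (sq_nonneg _) (hv i).le]
    exact sum_congr rfl fun i _ => (ENNReal.ofReal_div_of_pos (hv i)).symm
  by_cases hpos : ∀ i, 0 < r i
  · obtain ⟨hle, heq⟩ := sum_sq_div_le_of_lagrange hw hq hpos hsum hlag
    rw [hofReal hq, hofReal hpos, ENNReal.ofReal_eq_ofReal_iff
      (sum_nonneg fun i _ => div_nonneg (sq_nonneg _) (hpos i).le)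
      (sum_nonneg fun i _ => div_nonneg (sq_nonneg _) (hq i).le)]
    exact ⟨ENNReal.ofReal_le_ofReal hle, heq⟩
  · obtain ⟨i, hi⟩ := not_forall.mp hpos
    have hri : r i = 0 := le_antisymm (not_lt.mp hi) (hr i)
    have htop : ∑ i, ENNReal.ofReal (w i ^ 2) / ENNReal.ofReal (r i) = ⊤ := by
      refine ENNReal.sum_eq_top.mpr ⟨i, mem_univ i, ?_⟩
      rw [hri, ENNReal.ofReal_zero, ENNReal.div_zero]
      exact (ENNReal.ofReal_pos.mpr (sq_pos_of_ne_zero (hw i))).ne'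
    rw [htop, hofReal hq]
    exact ⟨le_top, fun h => absurd h.symm ENNReal.ofReal_ne_top⟩

end

/-- **The most beneficial increase is a threshold solution.**
Let `w i > 0` for all `i`, `p ∈ [0,1]^n`, and `x ∈ (0, ∑ i (1 - p i)]`.  Then there is a
threshold `y > 0` such that `δ i = min 1 (max (p i) (w i / y)) - p i` sums to `x`, and `δ`
is the unique minimizer of `∑ i, w i ^ 2 / (p i + δ i)` (valued in `ℝ≥0∞`, so that a zero
denominator yields `∞`) over all `δ` with `0 ≤ δ i ≤ 1 - p i` and `∑ i, δ i = x`. -/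
theorem best_increase (n : ℕ) (w p : Fin n → ℝ) (hw : ∀ i, 0 < w i)
    (hp0 : ∀ i, 0 ≤ p i) (hp1 : ∀ i, p i ≤ 1)
    (x : ℝ) (hx0 : 0 < x) (hx1 : x ≤ ∑ i, (1 - p i)) :
    ∃ y : ℝ, 0 < y ∧
      (∑ i, (min 1 (max (p i) (w i / y)) - p i)) = x ∧
      ∀ δ : Fin n → ℝ, (∀ i, 0 ≤ δ i ∧ δ i ≤ 1 - p i) → (∑ i, δ i = x) →
        (∑ i, ENNReal.ofReal (w i ^ 2) /
            ENNReal.ofReal (p i + (min 1 (max (p i) (w i / y)) - p i))) ≤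
          (∑ i, ENNReal.ofReal (w i ^ 2) / ENNReal.ofReal (p i + δ i)) ∧
        ((∑ i, ENNReal.ofReal (w i ^ 2) / ENNReal.ofReal (p i + δ i)) =
            (∑ i, ENNReal.ofReal (w i ^ 2) /
              ENNReal.ofReal (p i + (min 1 (max (p i) (w i / y)) - p i))) →
          δ = fun i => min 1 (max (p i) (w i / y)) - p i) := by
  have hcard : ∑ i, p i + x ≤ Fintype.card (Fin n) := by
    rw [sum_sub_distrib, sum_const, card_univ, nsmul_one] at hx1
    linarith
  obtain ⟨y, hy, hsum⟩ := exists_sum_thresholdProb_eq hw hp0 (lt_add_of_pos_right _ hx0) hcard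
  refine ⟨y, hy, by rw [sum_sub_distrib]; unfold thresholdProb at hsum; linarith,
    fun δ hδ hδx => ?_⟩
  simp only [add_sub_cancel]
  obtain ⟨hle, huniq⟩ := sum_ofReal_sq_div_le_of_lagrange (r := fun i => p i + δ i)
    (fun i => (hw i).ne') (fun i => thresholdProb_pos hy (hw i))
    (fun i => add_nonneg (hp0 i) (hδ i).1) (by rw [sum_add_distrib, hδx, hsum])
    (fun i => sub_mul_sq_div_thresholdProb_sq_le hy (hw i) (hp1 i)
      (le_add_of_nonneg_right (hδ i).1) (by linarith [(hδ i).2]))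
  refine ⟨hle, fun h => funext fun i => ?_⟩
  have := congrFun (huniq h) i
  unfold thresholdProb at this
  linarith
end

section
/- Let w ∈ ℝ^n with w_i > 0 for all i, let 1 ≤ k ≤ n, and let p ∈ (0,1]^n with Σ_i p_i = k. Let 0 < D ≤ ‖pps(k,w) − p‖₁. Let δ⁺ be the optimal best-increase vector of total amount D/2 for (w, p), and let δ⁻ be the optimal best-decrease vector of total amount D/2 for (w, p). Then δ⁺_i · δ⁻_i = 0 for every i (the increased and decreased coordinates are disjoint), and the vector q = p + δ⁺ − δ⁻ is an optimal solution of the Δ-stable PPS program: it minimizes Σ_i w_i²/q'_i over all q' ∈ [0,1]^n with Σ_i q'_i = k and Σ_i |q'_i − p_i| ≤ D. -/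
open Finset

private lemma sum_update' {n : ℕ} (f : Fin n → ℝ) (i : Fin n) (x : ℝ) :
    ∑ j, Function.update f i x j = ∑ j, f j - f i + x := by
  rw [Finset.sum_update_of_mem (mem_univ i)]
  simp [Finset.sum_erase_eq_sub (mem_univ i)]; ring

private lemma mul_nonneg_of_nonpos_nonpos {a b : ℝ} (ha : a ≤ 0) (hb : b ≤ 0) :
    0 ≤ a * b := by nlinarith

private lemma le_of_sq_le_sq' {a b : ℝ} (ha : 0 ≤ a) (hb : 0 ≤ b) (h : a ^ 2 ≤ b ^ 2) :
    a ≤ b := by nlinarith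

private lemma nonneg_of_forall_eps {A B ε₀ : ℝ} (hε₀ : 0 < ε₀)
    (h : ∀ ε : ℝ, 0 < ε → ε ≤ ε₀ → 0 ≤ A + ε * B) : 0 ≤ A := by
  by_contra hA
  push_neg at hA
  set C : ℝ := |B| + 1 with hC
  have hCpos : (0:ℝ) < C := by positivity
  set ε : ℝ := min ε₀ (-A / (2 * C)) with hε
  have hεpos : 0 < ε := lt_min hε₀ (div_pos (by linarith) (by positivity))
  have h1 := h ε hεpos (min_le_left _ _)
  have h2 : ε * B ≤ ε * C := by
    apply mul_le_mul_of_nonneg_left _ hεpos.le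
    have := le_abs_self B; linarith
  have h3 : ε * (2 * C) ≤ -A := by
    have := min_le_right ε₀ (-A / (2 * C))
    calc ε * (2 * C) ≤ (-A / (2 * C)) * (2 * C) := by
          apply mul_le_mul_of_nonneg_right _ (by positivity)
          rw [hε]; exact min_le_right _ _
      _ = -A := by field_simp
  nlinarith [h1, h2, h3]

private lemma sum_div_ofReal {n : ℕ} (w x : Fin n → ℝ) (hx : ∀ i, 0 < x i) :
    ∑ i, ENNReal.ofReal (w i ^ 2) / ENNReal.ofReal (x i)
      = ENNReal.ofReal (∑ i, w i ^ 2 / x i) := by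
  rw [ENNReal.ofReal_sum_of_nonneg (fun i _ => div_nonneg (sq_nonneg _) (hx i).le)]
  exact Finset.sum_congr rfl fun i _ => (ENNReal.ofReal_div_of_pos (hx i)).symm

private lemma real_of_opt {n : ℕ} (w x y : Fin n → ℝ) (hx : ∀ i, 0 < x i) (hy : ∀ i, 0 < y i)
    (h : ∑ i, ENNReal.ofReal (w i ^ 2) / ENNReal.ofReal (x i)
      ≤ ∑ i, ENNReal.ofReal (w i ^ 2) / ENNReal.ofReal (y i)) :
    ∑ i, w i ^ 2 / x i ≤ ∑ i, w i ^ 2 / y i := by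
  rw [sum_div_ofReal w x hx, sum_div_ofReal w y hy] at h
  exact (ENNReal.ofReal_le_ofReal_iff
    (Finset.sum_nonneg fun i _ => div_nonneg (sq_nonneg _) (hy i).le)).mp h

private lemma exchange_core {n : ℕ} (w x y : Fin n → ℝ) (i j : Fin n) (hij : i ≠ j)
    (hx : ∀ m, 0 < x m) (hyj : 0 < y j)
    (heq : ∀ m, m ≠ i → m ≠ j → y m = x m) {ε : ℝ} (hε : 0 < ε)
    (hyi' : y i = x i + ε) (hyj' : y j = x j - ε)
    (hle : ∑ m, w m ^ 2 / x m ≤ ∑ m, w m ^ 2 / y m) :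
    w i ^ 2 * (x j * (x j - ε)) ≤ w j ^ 2 * (x i * (x i + ε)) := by
  have hxi := hx i; have hxj := hx j
  have hyj0 : 0 < x j - ε := hyj' ▸ hyj
  have hsub : ∑ m ∈ ({i, j} : Finset (Fin n)), (w m ^ 2 / x m - w m ^ 2 / y m)
      = ∑ m, (w m ^ 2 / x m - w m ^ 2 / y m) := by
    refine Finset.sum_subset (Finset.subset_univ _) ?_
    intro m _ hm
    simp only [Finset.mem_insert, Finset.mem_singleton] at hm
    push_neg at hm
    rw [heq m hm.1 hm.2, sub_self]
  rw [Finset.sum_pair hij] at hsub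
  have h0 : (w i ^ 2 / x i - w i ^ 2 / y i) + (w j ^ 2 / x j - w j ^ 2 / y j) ≤ 0 := by
    rw [hsub, Finset.sum_sub_distrib]; linarith
  rw [hyi', hyj'] at h0
  have e1 : w i ^ 2 / x i - w i ^ 2 / (x i + ε) = w i ^ 2 * ε / (x i * (x i + ε)) := by
    field_simp; ring
  have e2 : w j ^ 2 / x j - w j ^ 2 / (x j - ε) = -(w j ^ 2 * ε / (x j * (x j - ε))) := by
    have h1 : x j ≠ 0 := ne_of_gt hxj
    have h2 : x j - ε ≠ 0 := ne_of_gt hyj0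
    field_simp
    ring
  rw [e1, e2] at h0
  have h1 : w i ^ 2 * ε / (x i * (x i + ε)) ≤ w j ^ 2 * ε / (x j * (x j - ε)) := by linarith
  rw [div_le_div_iff₀ (by positivity) (by positivity)] at h1
  have h2 : ε * (w i ^ 2 * (x j * (x j - ε))) ≤ ε * (w j ^ 2 * (x i * (x i + ε))) := by
    nlinarith [h1]
  exact le_of_mul_le_mul_left h2 hε

set_option maxHeartbeats 1000000 in
/-- **Combining the best increase and the best decrease of `D/2` each gives the
Δ-stable PPS distribution.**
Let `w i > 0`, `1 ≤ k ≤ n`, `p ∈ (0,1]^n` with `∑ p = k`, and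
`0 < D ≤ ‖pps(k,w) − p‖₁` where `pps(k,w) i = min 1 (w i / τ)` for a threshold `τ > 0`
with `∑ i, min 1 (w i / τ) = k`.  If `δp` is the optimal best-increase vector and `δm`
the optimal best-decrease vector, each of total amount `D/2` (objectives valued in
`ℝ≥0∞`), then the supports of `δp` and `δm` are disjoint, and `q = p + δp − δm` is an
optimal solution of the Δ-stable PPS program: it is feasible and minimizes
`∑ i, w i ^ 2 / q' i` over all `q' ∈ [0,1]^n` with `∑ q' = k` and `∑ |q' - p| ≤ D`. -/
theorem delta_stable_pps_from_increase_decrease (n k : ℕ) (w p : Fin n → ℝ)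
    (hw : ∀ i, 0 < w i) (hk1 : 1 ≤ k) (hkn : k ≤ n)
    (hp0 : ∀ i, 0 < p i) (hp1 : ∀ i, p i ≤ 1) (hpk : ∑ i, p i = (k : ℝ))
    (τ : ℝ) (hτ : 0 < τ) (hτk : ∑ i, min 1 (w i / τ) = (k : ℝ))
    (D : ℝ) (hD0 : 0 < D) (hD1 : D ≤ ∑ i, |min 1 (w i / τ) - p i|)
    (δp δm : Fin n → ℝ)
    (hδpf : (∀ i, 0 ≤ δp i ∧ δp i ≤ 1 - p i) ∧ ∑ i, δp i = D / 2)
    (hδpopt : ∀ δ : Fin n → ℝ, (∀ i, 0 ≤ δ i ∧ δ i ≤ 1 - p i) → (∑ i, δ i = D / 2) →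
      (∑ i, ENNReal.ofReal (w i ^ 2) / ENNReal.ofReal (p i + δp i)) ≤
        ∑ i, ENNReal.ofReal (w i ^ 2) / ENNReal.ofReal (p i + δ i))
    (hδmf : (∀ i, 0 ≤ δm i ∧ δm i ≤ p i) ∧ ∑ i, δm i = D / 2)
    (hδmopt : ∀ δ : Fin n → ℝ, (∀ i, 0 ≤ δ i ∧ δ i ≤ p i) → (∑ i, δ i = D / 2) →
      (∑ i, ENNReal.ofReal (w i ^ 2) / ENNReal.ofReal (p i - δm i)) ≤
        ∑ i, ENNReal.ofReal (w i ^ 2) / ENNReal.ofReal (p i - δ i)) :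
    (∀ i, δp i * δm i = 0) ∧
    (∀ i, 0 ≤ p i + δp i - δm i ∧ p i + δp i - δm i ≤ 1) ∧
    (∑ i, (p i + δp i - δm i) = (k : ℝ)) ∧
    (∑ i, |(p i + δp i - δm i) - p i| ≤ D) ∧
    ∀ q' : Fin n → ℝ, (∀ i, 0 ≤ q' i ∧ q' i ≤ 1) → (∑ i, q' i = (k : ℝ)) →
      (∑ i, |q' i - p i| ≤ D) →
      (∑ i, ENNReal.ofReal (w i ^ 2) / ENNReal.ofReal (p i + δp i - δm i)) ≤
        ∑ i, ENNReal.ofReal (w i ^ 2) / ENNReal.ofReal (q' i) := by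
  obtain ⟨hδpb, hδps⟩ := hδpf
  obtain ⟨hδmb, hδms⟩ := hδmf
  -- basic notation and facts
  have ha0 : ∀ i, 0 < p i + δp i := fun i => add_pos_of_pos_of_nonneg (hp0 i) (hδpb i).1
  have ha1 : ∀ i, p i + δp i ≤ 1 := fun i => by linarith [(hδpb i).2]
  have hpps0 : ∀ i, 0 < min 1 (w i / τ) := fun i => lt_min one_pos (div_pos (hw i) hτ)
  have hpps1 : ∀ i, min 1 (w i / τ) ≤ 1 := fun i => min_le_left _ _
  have hppsw : ∀ i, min 1 (w i / τ) ≤ w i / τ := fun i => min_le_right _ _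
  -- the two half-mass bounds
  have hsum0 : ∑ i, (min 1 (w i / τ) - p i) = 0 := by
    rw [Finset.sum_sub_distrib, hτk, hpk]; ring
  have hSp : D / 2 ≤ ∑ i, max 0 (min 1 (w i / τ) - p i) := by
    have e : ∀ i : Fin n, max 0 (min 1 (w i / τ) - p i)
        = ((min 1 (w i / τ) - p i) + |min 1 (w i / τ) - p i|) / 2 := by
      intro i
      rcases le_total (min 1 (w i / τ) - p i) 0 with h | h
      · rw [max_eq_left h, abs_of_nonpos h]; ring
      · rw [max_eq_right h, abs_of_nonneg h]; ring
    rw [Finset.sum_congr rfl fun i _ => e i, ← Finset.sum_div, Finset.sum_add_distrib, hsum0]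
    linarith
  have hSm : D / 2 ≤ ∑ i, max 0 (p i - min 1 (w i / τ)) := by
    have e : ∀ i : Fin n, max 0 (p i - min 1 (w i / τ))
        = ((p i - min 1 (w i / τ)) + |min 1 (w i / τ) - p i|) / 2 := by
      intro i
      rw [abs_sub_comm]
      rcases le_total (p i - min 1 (w i / τ)) 0 with h | h
      · rw [max_eq_left h, abs_of_nonpos h]; ring
      · rw [max_eq_right h, abs_of_nonneg h]; ring
    have hsum0' : ∑ i, (p i - min 1 (w i / τ)) = 0 := by
      rw [Finset.sum_sub_distrib, hτk, hpk]; ring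
    rw [Finset.sum_congr rfl fun i _ => e i, ← Finset.sum_div, Finset.sum_add_distrib, hsum0']
    linarith
  -- all decreased coordinates stay strictly positive
  have hc0 : ∀ i, 0 < p i - δm i := by
    by_contra hcon
    push_neg at hcon
    obtain ⟨i0, hi0⟩ := hcon
    set Sm : ℝ := ∑ i, max 0 (p i - min 1 (w i / τ)) with hSmdef
    have hSmpos : 0 < Sm := lt_of_lt_of_le (by linarith) hSm
    set δ0 : Fin n → ℝ := fun i => D / 2 * max 0 (p i - min 1 (w i / τ)) / Sm with hδ0
    have hδ0b : ∀ i, 0 ≤ δ0 i ∧ δ0 i ≤ p i := by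
      intro i
      constructor
      · apply div_nonneg (mul_nonneg (by linarith) (le_max_left _ _)) hSmpos.le
      · have h1 : δ0 i ≤ max 0 (p i - min 1 (w i / τ)) := by
          rw [hδ0]
          rw [div_le_iff₀ hSmpos]
          have := le_max_left (0:ℝ) (p i - min 1 (w i / τ))
          nlinarith [hSm]
        have h2 : max 0 (p i - min 1 (w i / τ)) < p i :=
          max_lt (hp0 i) (by linarith [hpps0 i])
        linarith
    have hδ0lt : ∀ i, 0 < p i - δ0 i := by
      intro i
      have h1 : δ0 i ≤ max 0 (p i - min 1 (w i / τ)) := by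
        rw [hδ0, div_le_iff₀ hSmpos]
        have := le_max_left (0:ℝ) (p i - min 1 (w i / τ))
        nlinarith [hSm]
      have h2 : max 0 (p i - min 1 (w i / τ)) < p i :=
        max_lt (hp0 i) (by linarith [hpps0 i])
      linarith
    have hδ0s : ∑ i, δ0 i = D / 2 := by
      have e : ∑ i, δ0 i = D / 2 * (∑ i, max 0 (p i - min 1 (w i / τ))) / Sm := by
        rw [hδ0, ← Finset.sum_div, ← Finset.mul_sum]
      rw [e, ← hSmdef, mul_div_assoc, div_self hSmpos.ne', mul_one]
    have hle := hδmopt δ0 hδ0b hδ0s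
    have hRHS : ∑ i, ENNReal.ofReal (w i ^ 2) / ENNReal.ofReal (p i - δ0 i) ≠ ⊤ := by
      rw [sum_div_ofReal w _ hδ0lt]
      exact ENNReal.ofReal_ne_top
    have hLHS : ∑ i, ENNReal.ofReal (w i ^ 2) / ENNReal.ofReal (p i - δm i) = ⊤ := by
      rw [ENNReal.sum_eq_top]
      refine ⟨i0, Finset.mem_univ i0, ?_⟩
      have hden : ENNReal.ofReal (p i0 - δm i0) = 0 := ENNReal.ofReal_eq_zero.mpr hi0
      have hnum : ENNReal.ofReal (w i0 ^ 2) ≠ 0 := by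
        simp only [ne_eq, ENNReal.ofReal_eq_zero, not_le]
        exact pow_pos (hw i0) 2
      rw [hden]
      exact ENNReal.div_zero hnum
    rw [hLHS] at hle
    exact hRHS (top_le_iff.mp hle)
  have hc1 : ∀ i, p i - δm i ≤ p i := fun i => by linarith [(hδmb i).1]
  -- exchange inequalities
  have IncEx : ∀ i j, i ≠ j → 0 < δp j → p i + δp i < 1 →
      w i * (p j + δp j) ≤ w j * (p i + δp i) := by
    intro i j hij hj hi1
    set ε₀ : ℝ := min (δp j) (1 - (p i + δp i)) with hε₀def
    have hε₀ : 0 < ε₀ := lt_min hj (by linarith)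
    have key : ∀ ε : ℝ, 0 < ε → ε ≤ ε₀ →
        w i ^ 2 * ((p j + δp j) * ((p j + δp j) - ε))
          ≤ w j ^ 2 * ((p i + δp i) * ((p i + δp i) + ε)) := by
      intro ε hε hεle
      have hεj : ε ≤ δp j := le_trans hεle (min_le_left _ _)
      have hεi : ε ≤ 1 - (p i + δp i) := le_trans hεle (min_le_right _ _)
      set δ : Fin n → ℝ :=
        Function.update (Function.update δp i (δp i + ε)) j (δp j - ε) with hδdef
      have hδi : δ i = δp i + ε := by
        rw [hδdef, Function.update_of_ne hij, Function.update_self]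
      have hδj : δ j = δp j - ε := by
        rw [hδdef, Function.update_self]
      have hδm' : ∀ m, m ≠ i → m ≠ j → δ m = δp m := by
        intro m hmi hmj
        rw [hδdef, Function.update_of_ne hmj, Function.update_of_ne hmi]
      have hδb : ∀ m, 0 ≤ δ m ∧ δ m ≤ 1 - p m := by
        intro m
        by_cases hmi : m = i
        · subst hmi; rw [hδi]
          exact ⟨by linarith [(hδpb m).1], by linarith⟩
        · by_cases hmj : m = j
          · subst hmj; rw [hδj]
            exact ⟨by linarith, by linarith [(hδpb m).2]⟩
          · rw [hδm' m hmi hmj]; exact hδpb m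
      have hδs : ∑ m, δ m = D / 2 := by
        rw [hδdef, sum_update', sum_update']
        rw [Function.update_of_ne (Ne.symm hij)]
        rw [hδps]; ring
      have hle := hδpopt δ hδb hδs
      have hy : ∀ m, 0 < p m + δ m := fun m => add_pos_of_pos_of_nonneg (hp0 m) (hδb m).1
      have hreal : ∑ m, w m ^ 2 / (p m + δp m) ≤ ∑ m, w m ^ 2 / (p m + δ m) :=
        real_of_opt w _ _ ha0 hy hle
      have := exchange_core w (fun m => p m + δp m) (fun m => p m + δ m) i j hij
        ha0 (by simpa using hy j)
        (fun m h1 h2 => by show p m + δ m = p m + δp m; rw [hδm' m h1 h2]) hε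
        (by show p i + δ i = p i + δp i + ε; rw [hδi]; ring)
        (by show p j + δ j = p j + δp j - ε; rw [hδj]; ring) hreal
      exact this
    have hA : 0 ≤ w j ^ 2 * ((p i + δp i) * (p i + δp i)) -
        w i ^ 2 * ((p j + δp j) * (p j + δp j)) := by
      apply nonneg_of_forall_eps hε₀
        (B := w j ^ 2 * (p i + δp i) + w i ^ 2 * (p j + δp j))
      intro ε hε hεle
      have := key ε hε hεle
      nlinarith [this]
    apply le_of_sq_le_sq' (mul_nonneg (hw i).le (ha0 j).le) (mul_nonneg (hw j).le (ha0 i).le)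
    nlinarith [hA]
  have DecEx : ∀ i j, i ≠ j → 0 < δm j →
      w j * (p i - δm i) ≤ w i * (p j - δm j) := by
    intro i j hij hj
    set ε₀ : ℝ := min (δm j) ((p i - δm i) / 2) with hε₀def
    have hε₀ : 0 < ε₀ := lt_min hj (by linarith [hc0 i])
    have key : ∀ ε : ℝ, 0 < ε → ε ≤ ε₀ →
        w j ^ 2 * ((p i - δm i) * ((p i - δm i) - ε))
          ≤ w i ^ 2 * ((p j - δm j) * ((p j - δm j) + ε)) := by
      intro ε hε hεle
      have hεj : ε ≤ δm j := le_trans hεle (min_le_left _ _)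
      have hεi : ε ≤ (p i - δm i) / 2 := le_trans hεle (min_le_right _ _)
      set δ : Fin n → ℝ :=
        Function.update (Function.update δm i (δm i + ε)) j (δm j - ε) with hδdef
      have hδi : δ i = δm i + ε := by
        rw [hδdef, Function.update_of_ne hij, Function.update_self]
      have hδj : δ j = δm j - ε := by
        rw [hδdef, Function.update_self]
      have hδm' : ∀ m, m ≠ i → m ≠ j → δ m = δm m := by
        intro m hmi hmj
        rw [hδdef, Function.update_of_ne hmj, Function.update_of_ne hmi]
      have hδb : ∀ m, 0 ≤ δ m ∧ δ m ≤ p m := by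
        intro m
        by_cases hmi : m = i
        · subst hmi; rw [hδi]
          exact ⟨by linarith [(hδmb m).1], by linarith [hc0 m]⟩
        · by_cases hmj : m = j
          · subst hmj; rw [hδj]
            exact ⟨by linarith, by linarith [(hδmb m).2, hj]⟩
          · rw [hδm' m hmi hmj]; exact hδmb m
      have hδs : ∑ m, δ m = D / 2 := by
        rw [hδdef, sum_update', sum_update']
        rw [Function.update_of_ne (Ne.symm hij)]
        rw [hδms]; ring
      have hle := hδmopt δ hδb hδs
      have hy : ∀ m, 0 < p m - δ m := by
        intro m
        by_cases hmi : m = i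
        · subst hmi; rw [hδi]; linarith [hc0 m]
        · by_cases hmj : m = j
          · subst hmj; rw [hδj]; linarith [hc0 m]
          · rw [hδm' m hmi hmj]; exact hc0 m
      have hreal : ∑ m, w m ^ 2 / (p m - δm m) ≤ ∑ m, w m ^ 2 / (p m - δ m) :=
        real_of_opt w _ _ hc0 hy hle
      have := exchange_core w (fun m => p m - δm m) (fun m => p m - δ m) j i hij.symm
        hc0 (by simpa using hy i)
        (fun m h1 h2 => by show p m - δ m = p m - δm m; rw [hδm' m h2 h1]) hε
        (by show p j - δ j = p j - δm j + ε; rw [hδj]; ring)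
        (by show p i - δ i = p i - δm i - ε; rw [hδi]; ring) hreal
      exact this
    have hA : 0 ≤ w i ^ 2 * ((p j - δm j) * (p j - δm j)) -
        w j ^ 2 * ((p i - δm i) * (p i - δm i)) := by
      apply nonneg_of_forall_eps hε₀
        (B := w i ^ 2 * (p j - δm j) + w j ^ 2 * (p i - δm i))
      intro ε hε hεle
      have := key ε hε hεle
      nlinarith [this]
    apply le_of_sq_le_sq' (mul_nonneg (hw j).le (hc0 i).le) (mul_nonneg (hw i).le (hc0 j).le)
    nlinarith [hA]
  -- pick an increased coordinate of minimal ratio and any decreased coordinate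
  have hJex : ∃ j, 0 < δp j := by
    by_contra hcon
    push_neg at hcon
    have : ∑ i, δp i = 0 := Finset.sum_eq_zero fun i _ => le_antisymm (hcon i) (hδpb i).1
    linarith
  have hIex : ∃ j, 0 < δm j := by
    by_contra hcon
    push_neg at hcon
    have : ∑ i, δm i = 0 := Finset.sum_eq_zero fun i _ => le_antisymm (hcon i) (hδmb i).1
    linarith
  obtain ⟨J0, hJ0⟩ := hJex
  obtain ⟨I, hI⟩ := hIex
  set s : Finset (Fin n) := Finset.univ.filter (fun j => 0 < δp j) with hsdef
  have hsne : s.Nonempty := ⟨J0, by simp [hsdef, hJ0]⟩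
  obtain ⟨J, hJmem, hJmin⟩ := s.exists_min_image (fun j => w j / (p j + δp j)) hsne
  have hJp : 0 < δp J := by
    rw [hsdef] at hJmem
    exact (Finset.mem_filter.mp hJmem).2
  -- ratio facts
  have hWJlo : ∀ j, 0 < δp j → w J / (p J + δp J) ≤ w j / (p j + δp j) := by
    intro j hj
    exact hJmin j (by simp [hsdef, hj])
  have hWJhi : ∀ i, p i + δp i < 1 → w i / (p i + δp i) ≤ w J / (p J + δp J) := by
    intro i hi1
    by_cases hiJ : i = J
    · subst hiJ; exact le_refl _
    · rw [div_le_div_iff₀ (ha0 i) (ha0 J)]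
      exact IncEx i J hiJ hJp hi1
  have hμlo : ∀ i, w I / (p I - δm I) ≤ w i / (p i - δm i) := by
    intro i
    by_cases hiI : i = I
    · subst hiI; exact le_refl _
    · rw [div_le_div_iff₀ (hc0 I) (hc0 i)]
      exact DecEx i I hiI hI
  have hμhi : ∀ j, 0 < δm j → w j / (p j - δm j) ≤ w I / (p I - δm I) := by
    intro j hj
    by_cases hjI : j = I
    · subst hjI; exact le_refl _
    · rw [div_le_div_iff₀ (hc0 j) (hc0 I)]
      exact DecEx I j (fun h => hjI h.symm) hj
  -- lambda >= tau
  have hWJtau : τ ≤ w J / (p J + δp J) := by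
    by_contra hcon
    push_neg at hcon
    have key : ∀ i, max 0 (min 1 (w i / τ) - p i) ≤ δp i := by
      intro i
      rcases lt_or_eq_of_le (ha1 i) with h1 | h1
      · have h2 : w i / (p i + δp i) < τ := lt_of_le_of_lt (hWJhi i h1) hcon
        have h3 : w i < τ * (p i + δp i) := by
          rw [div_lt_iff₀ (ha0 i)] at h2; linarith
        have h4 : w i / τ < p i + δp i := by
          rw [div_lt_iff₀ hτ]; linarith
        exact max_le (hδpb i).1 (by linarith [hppsw i])
      · exact max_le (hδpb i).1 (by linarith [hpps1 i])
    have hstrict : max 0 (min 1 (w J / τ) - p J) < δp J := by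
      have h2 : w J < τ * (p J + δp J) := by
        rw [div_lt_iff₀ (ha0 J)] at hcon; linarith
      have h4 : w J / τ < p J + δp J := by
        rw [div_lt_iff₀ hτ]; linarith
      exact max_lt hJp (by linarith [hppsw J])
    have hlt2 : ∑ i, max 0 (min 1 (w i / τ) - p i) < ∑ i, δp i :=
      Finset.sum_lt_sum (fun i _ => key i) ⟨J, Finset.mem_univ J, hstrict⟩
    rw [hδps] at hlt2
    linarith
  -- mu <= tau
  have hWItau : w I / (p I - δm I) ≤ τ := by
    by_contra hcon
    push_neg at hcon
    have key : ∀ i, max 0 (p i - min 1 (w i / τ)) ≤ δm i := by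
      intro i
      have h2 : τ < w i / (p i - δm i) := lt_of_lt_of_le hcon (hμlo i)
      have h3 : τ * (p i - δm i) < w i := by
        rw [lt_div_iff₀ (hc0 i)] at h2; linarith
      have h4 : p i - δm i < w i / τ := by
        rw [lt_div_iff₀ hτ]; linarith
      have h5 : p i - δm i ≤ min 1 (w i / τ) :=
        le_min (by linarith [hc1 i, hp1 i]) h4.le
      exact max_le (hδmb i).1 (by linarith)
    have hstrict : max 0 (p I - min 1 (w I / τ)) < δm I := by
      have h2 : τ * (p I - δm I) < w I := by
        rw [lt_div_iff₀ (hc0 I)] at hcon; linarith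
      have h4 : p I - δm I < w I / τ := by
        rw [lt_div_iff₀ hτ]; linarith
      have h5 : p I - δm I < min 1 (w I / τ) :=
        lt_min (by linarith [hp1 I, hI]) h4
      exact max_lt hI (by linarith)
    have hlt2 : ∑ i, max 0 (p i - min 1 (w i / τ)) < ∑ i, δm i :=
      Finset.sum_lt_sum (fun i _ => key i) ⟨I, Finset.mem_univ I, hstrict⟩
    rw [hδms] at hlt2
    linarith
  -- disjoint supports
  have hdisj : ∀ i, δp i * δm i = 0 := by
    intro i
    by_contra hcon
    have hpi : 0 < δp i := lt_of_le_of_ne (hδpb i).1 (fun h => hcon (by rw [← h]; ring))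
    have hmi : 0 < δm i := lt_of_le_of_ne (hδmb i).1
      (fun h => hcon (by rw [← h]; ring))
    have h1 : w J / (p J + δp J) ≤ w i / (p i + δp i) := hWJlo i hpi
    have h2 : w i / (p i - δm i) ≤ w I / (p I - δm I) := hμhi i hmi
    have h3 : w i / (p i + δp i) < w i / (p i - δm i) := by
      apply div_lt_div_of_pos_left (hw i) (hc0 i)
      linarith
    linarith
  -- feasibility of q
  have hq0 : ∀ i, 0 < p i + δp i - δm i := by
    intro i
    rcases mul_eq_zero.mp (hdisj i) with h | h
    · rw [h]; simpa using hc0 i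
    · rw [h]; simpa using ha0 i
  have hq1 : ∀ i, p i + δp i - δm i ≤ 1 := fun i => by linarith [ha1 i, (hδmb i).1]
  have hqk : ∑ i, (p i + δp i - δm i) = (k : ℝ) := by
    rw [Finset.sum_sub_distrib, Finset.sum_add_distrib, hpk, hδps, hδms]; ring
  have habsq : ∀ i, |(p i + δp i - δm i) - p i| = δp i + δm i := by
    intro i
    rcases mul_eq_zero.mp (hdisj i) with h | h
    · rw [h]
      have : p i + 0 - δm i - p i = -δm i := by ring
      rw [this, abs_neg, abs_of_nonneg (hδmb i).1]; ring
    · rw [h]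
      have : p i + δp i - 0 - p i = δp i := by ring
      rw [this, abs_of_nonneg (hδpb i).1]; ring
  have hqD : ∑ i, |(p i + δp i - δm i) - p i| = D := by
    rw [Finset.sum_congr rfl fun i _ => habsq i, Finset.sum_add_distrib, hδps, hδms]
    ring
  refine ⟨hdisj, fun i => ⟨(hq0 i).le, hq1 i⟩, hqk, le_of_eq hqD, ?_⟩
  -- optimality
  intro q' hq'b hq'k hq'D
  by_cases hq'pos : ∀ i, 0 < q' i
  swap
  · push_neg at hq'pos
    obtain ⟨i0, hi0⟩ := hq'pos
    have hterm : ENNReal.ofReal (w i0 ^ 2) / ENNReal.ofReal (q' i0) = ⊤ := by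
      rw [ENNReal.ofReal_eq_zero.mpr hi0, ENNReal.div_zero]
      rw [ne_eq, ENNReal.ofReal_eq_zero]
      push_neg
      exact pow_pos (hw i0) 2
    have : ∑ i, ENNReal.ofReal (w i ^ 2) / ENNReal.ofReal (q' i) = ⊤ :=
      ENNReal.sum_eq_top.mpr ⟨i0, Finset.mem_univ i0, hterm⟩
    rw [this]
    exact le_top
  -- real version
  rw [sum_div_ofReal w _ hq0, sum_div_ofReal w _ hq'pos]
  apply ENNReal.ofReal_le_ofReal
  set L : ℝ := (w J / (p J + δp J)) ^ 2 with hLdef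
  set M : ℝ := (w I / (p I - δm I)) ^ 2 with hMdef
  have hβ0 : 0 ≤ (L - M) / 2 := by
    have h1 : 0 < w I / (p I - δm I) := div_pos (hw I) (hc0 I)
    have h2 : w I / (p I - δm I) ≤ w J / (p J + δp J) := le_trans hWItau hWJtau
    rw [hLdef, hMdef]
    nlinarith
  set g : Fin n → ℝ := fun i => (w i / (p i + δp i - δm i)) ^ 2 with hgdef
  -- per-coordinate KKT inequality
  have hG : ∀ i, 0 ≤ ((L + M) / 2 - g i) * (q' i - (p i + δp i - δm i))
      + (L - M) / 2 * (|q' i - p i| - |(p i + δp i - δm i) - p i|) := by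
    intro i
    have habs1 : q' i - p i ≤ |q' i - p i| := le_abs_self _
    have habs2 : -(q' i - p i) ≤ |q' i - p i| := neg_le_abs _
    rcases ((hδpb i).1).lt_or_eq with hpi | hpi
    · -- increased coordinate
      have hmi : δm i = 0 := by
        rcases mul_eq_zero.mp (hdisj i) with h | h
        · exact absurd h.symm (ne_of_lt hpi)
        · exact h
      have hqi : p i + δp i - δm i = p i + δp i := by rw [hmi]; ring
      have habsq' : |(p i + δp i - δm i) - p i| = (p i + δp i - δm i) - p i := by
        rw [hqi]; rw [abs_of_nonneg (by linarith)]
      rw [habsq', hqi]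
      rcases lt_or_eq_of_le (ha1 i) with h1 | h1
      · -- not capped: g i = L
        have hgi : g i = L := by
          have e1 : w i / (p i + δp i) ≤ w J / (p J + δp J) := hWJhi i h1
          have e2 : w J / (p J + δp J) ≤ w i / (p i + δp i) := hWJlo i hpi
          rw [hgdef, hLdef]
          simp only [hqi]
          rw [le_antisymm e1 e2]
        rw [hgi]
        have : ((L + M) / 2 - L) * (q' i - (p i + δp i))
            + (L - M) / 2 * (|q' i - p i| - (p i + δp i - p i))
            = (L - M) / 2 * (|q' i - p i| - (q' i - p i)) := by ring
        rw [this]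
        exact mul_nonneg hβ0 (by linarith)
      · -- capped: g i ≥ L, q' i ≤ 1 = p i + δp i
        have hgi : L ≤ g i := by
          have e2 : w J / (p J + δp J) ≤ w i / (p i + δp i) := hWJlo i hpi
          have e3 : 0 ≤ w J / (p J + δp J) := (div_pos (hw J) (ha0 J)).le
          rw [hgdef, hLdef]
          simp only [hqi]
          nlinarith
        have hs : q' i - (p i + δp i) ≤ 0 := by
          have := (hq'b i).2
          linarith
        have : ((L + M) / 2 - g i) * (q' i - (p i + δp i))
            + (L - M) / 2 * (|q' i - p i| - (p i + δp i - p i))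
            = (L - M) / 2 * (|q' i - p i| - (q' i - p i))
              + (L - g i) * (q' i - (p i + δp i)) := by ring
        rw [this]
        have h2 : 0 ≤ (L - g i) * (q' i - (p i + δp i)) :=
          mul_nonneg_of_nonpos_nonpos (by linarith) hs
        have h3 : 0 ≤ (L - M) / 2 * (|q' i - p i| - (q' i - p i)) :=
          mul_nonneg hβ0 (by linarith)
        linarith
    · -- not increased
      rcases ((hδmb i).1).lt_or_eq with hmi | hmi
      · -- decreased coordinate: g i = M
        have hqi : p i + δp i - δm i = p i - δm i := by rw [← hpi]; ring
        have habsq' : |(p i + δp i - δm i) - p i| = p i - (p i + δp i - δm i) := by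
          rw [hqi, abs_of_nonpos (by linarith)]; ring
        have hgi : g i = M := by
          have e1 : w I / (p I - δm I) ≤ w i / (p i - δm i) := hμlo i
          have e2 : w i / (p i - δm i) ≤ w I / (p I - δm I) := hμhi i hmi
          rw [hgdef, hMdef]
          simp only [hqi]
          rw [le_antisymm e2 e1]
        rw [habsq', hgi, hqi]
        have : ((L + M) / 2 - M) * (q' i - (p i - δm i))
            + (L - M) / 2 * (|q' i - p i| - (p i - (p i - δm i)))
            = (L - M) / 2 * (|q' i - p i| + (q' i - p i)) := by ring
        rw [this]
        exact mul_nonneg hβ0 (by linarith)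
      · -- untouched coordinate: q i = p i
        have hqi : p i + δp i - δm i = p i := by rw [← hpi, ← hmi]; ring
        have habsq' : |(p i + δp i - δm i) - p i| = 0 := by
          rw [hqi]; simp
        have hgM : M ≤ g i := by
          have e1 : w I / (p I - δm I) ≤ w i / (p i - δm i) := hμlo i
          have e1' : w i / (p i - δm i) = w i / (p i + δp i - δm i) := by
            rw [← hpi]; ring_nf
          have e3 : 0 ≤ w I / (p I - δm I) := (div_pos (hw I) (hc0 I)).le
          rw [hgdef, hMdef]
          rw [e1'] at e1
          nlinarith
        rw [habsq', hqi]
        rcases lt_or_eq_of_le (hp1 i) with h1 | h1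
        · -- p i < 1
          have hgL : g i ≤ L := by
            have h2 : p i + δp i < 1 := by rw [← hpi]; simpa using h1
            have e1 : w i / (p i + δp i) ≤ w J / (p J + δp J) := hWJhi i h2
            have e3 : 0 ≤ w i / (p i + δp i) := (div_pos (hw i) (ha0 i)).le
            have e1' : w i / (p i + δp i) = w i / (p i + δp i - δm i) := by
              rw [← hmi]; ring_nf
            rw [hgdef, hLdef]
            rw [e1'] at e1 e3
            nlinarith
          have habs3 : 0 ≤ |q' i - p i| - (q' i - p i) := by linarith
          have habs4 : 0 ≤ |q' i - p i| + (q' i - p i) := by linarith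
          nlinarith [mul_nonneg (by linarith : (0:ℝ) ≤ L - g i) habs4,
            mul_nonneg (by linarith : (0:ℝ) ≤ g i - M) habs3]
        · -- p i = 1
          have hs : q' i - p i ≤ 0 := by
            have := (hq'b i).2; linarith
          have habs5 : |q' i - p i| = -(q' i - p i) := abs_of_nonpos hs
          rw [habs5]
          have : ((L + M) / 2 - g i) * (q' i - p i)
              + (L - M) / 2 * (-(q' i - p i) - 0)
              = (M - g i) * (q' i - p i) := by ring
          rw [this]
          exact mul_nonneg_of_nonpos_nonpos (by linarith) hs
  -- convexity per coordinate
  have hconv : ∀ i ∈ Finset.univ, w i ^ 2 / (p i + δp i - δm i)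
      - g i * (q' i - (p i + δp i - δm i)) ≤ w i ^ 2 / q' i := by
    intro i _
    have hqi := hq0 i
    have hq'i := hq'pos i
    have key : w i ^ 2 / q' i - (w i ^ 2 / (p i + δp i - δm i)
        - g i * (q' i - (p i + δp i - δm i)))
        = w i ^ 2 * (q' i - (p i + δp i - δm i)) ^ 2
          / ((p i + δp i - δm i) ^ 2 * q' i) := by
      rw [hgdef]
      field_simp
      ring
    linarith [key, div_nonneg (mul_nonneg (sq_nonneg (w i))
      (sq_nonneg (q' i - (p i + δp i - δm i))))
      (mul_nonneg (sq_nonneg (p i + δp i - δm i)) hq'i.le)]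
  have h2 := Finset.sum_le_sum hconv
  rw [Finset.sum_sub_distrib] at h2
  -- bound the linear term
  have h3 : ∀ i ∈ Finset.univ, g i * (q' i - (p i + δp i - δm i))
      ≤ (L + M) / 2 * (q' i - (p i + δp i - δm i))
        + (L - M) / 2 * (|q' i - p i| - |(p i + δp i - δm i) - p i|) := by
    intro i _
    have hexp : ((L + M) / 2 - g i) * (q' i - (p i + δp i - δm i))
        = (L + M) / 2 * (q' i - (p i + δp i - δm i))
          - g i * (q' i - (p i + δp i - δm i)) := by ring
    linarith [hG i, hexp]
  have h4 := Finset.sum_le_sum h3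
  have e1 : ∑ i, (q' i - (p i + δp i - δm i)) = 0 := by
    rw [Finset.sum_sub_distrib, hq'k, hqk]; ring
  have e2 : ∑ i, (|q' i - p i| - |(p i + δp i - δm i) - p i|)
      = ∑ i, |q' i - p i| - D := by
    rw [Finset.sum_sub_distrib, hqD]
  rw [Finset.sum_add_distrib, ← Finset.mul_sum, ← Finset.mul_sum, e1, e2] at h4
  have h5 : ∑ i, g i * (q' i - (p i + δp i - δm i)) ≤ 0 := by
    have h6 : (L - M) / 2 * (∑ i, |q' i - p i| - D) ≤ 0 :=
      mul_nonpos_of_nonneg_of_nonpos hβ0 (by linarith)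
    calc ∑ i, g i * (q' i - (p i + δp i - δm i))
        ≤ (L + M) / 2 * 0 + (L - M) / 2 * (∑ i, |q' i - p i| - D) := h4
      _ ≤ 0 := by linarith
  linarith
end

section
/- Let w ∈ ℝ^n with w_i > 0 for all i, let 1 ≤ k ≤ n, and let p ∈ (0,1]^n with Σ_i p_i = k. Define V(D) = min { Σ_i w_i²/q_i : q ∈ (0,1]^n, Σ_i q_i = k, Σ_i |q_i − p_i| ≤ D } for D ≥ 0. Then V is non-increasing and convex on [0,∞). Equivalently, the fitness of the Δ-stable PPS distribution is a concave non-decreasing function of the allowed changeout D, so the stability–fit tradeoff for PPS sampling is concave. -/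
lemma combo_pos' {a b t s : ℝ} (ha : 0 < a) (hb : 0 < b) (ht : 0 ≤ t) (hs : 0 ≤ s)
    (hts : t + s = 1) : 0 < t * a + s * b := by
  rcases ht.lt_or_eq with h | h
  · have h1 : 0 < t * a := mul_pos h ha
    have h2 : 0 ≤ s * b := mul_nonneg hs hb.le
    linarith
  · have hs1 : s = 1 := by linarith
    have : s * b = b := by rw [hs1, one_mul]
    nlinarith

lemma div_combo_le {a b t s c : ℝ} (ha : 0 < a) (hb : 0 < b) (ht : 0 ≤ t) (hs : 0 ≤ s)
    (hts : t + s = 1) (hc : 0 ≤ c) :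
    c / (t * a + s * b) ≤ t * (c / a) + s * (c / b) := by
  have hab : 0 < t * a + s * b := combo_pos' ha hb ht hs hts
  have hrhs : t * (c / a) + s * (c / b) = (t * c * b + s * c * a) / (a * b) := by
    field_simp
  rw [hrhs, div_le_div_iff₀ hab (mul_pos ha hb)]
  have hseq : s = 1 - t := by linarith
  rw [hseq]
  nlinarith [mul_nonneg (mul_nonneg (mul_nonneg ht (by linarith : (0:ℝ) ≤ 1 - t)) hc)
    (sq_nonneg (a - b))]

/-- **The stability–fit tradeoff for PPS sampling is concave.**
For weights `w i > 0`, `1 ≤ k ≤ n`, and current probabilities `p ∈ (0,1]^n` with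
`∑ p = k`, the optimal value `V D` of the Δ-stable PPS program with changeout budget `D`
is non-increasing and convex on `[0,∞)`; equivalently the fitness `−V D` is a concave
non-decreasing function of `D`. -/
theorem pps_tradeoff_concave (n k : ℕ) (w p : Fin n → ℝ)
    (hw : ∀ i, 0 < w i) (hk1 : 1 ≤ k) (hkn : k ≤ n)
    (hp0 : ∀ i, 0 < p i) (hp1 : ∀ i, p i ≤ 1) (hpk : ∑ i, p i = (k : ℝ))
    (V : ℝ → ℝ)
    (hV : ∀ D, V D = sInf {v : ℝ | ∃ q : Fin n → ℝ,
      (∀ i, 0 < q i ∧ q i ≤ 1) ∧ (∑ i, q i = (k : ℝ)) ∧ (∑ i, |q i - p i| ≤ D) ∧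
      v = ∑ i, w i ^ 2 / q i}) :
    AntitoneOn V (Set.Ici 0) ∧ ConvexOn ℝ (Set.Ici 0) V := by
  set S : ℝ → Set ℝ := fun D => {v : ℝ | ∃ q : Fin n → ℝ,
      (∀ i, 0 < q i ∧ q i ≤ 1) ∧ (∑ i, q i = (k : ℝ)) ∧ (∑ i, |q i - p i| ≤ D) ∧
      v = ∑ i, w i ^ 2 / q i} with hS
  have hbdd : ∀ D, BddBelow (S D) := by
    intro D
    refine ⟨0, ?_⟩
    rintro v ⟨q, hq, -, -, rfl⟩
    exact Finset.sum_nonneg fun i _ => div_nonneg (sq_nonneg _) (hq i).1.le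
  have hne : ∀ D, 0 ≤ D → (S D).Nonempty := by
    intro D hD
    refine ⟨_, p, fun i => ⟨hp0 i, hp1 i⟩, hpk, ?_, rfl⟩
    simpa using hD
  have hmono : AntitoneOn V (Set.Ici 0) := by
    intro a ha b hb hab
    rw [hV a, hV b]
    refine csInf_le_csInf (hbdd b) (hne a ha) ?_
    rintro v ⟨q, h1, h2, h3, h4⟩
    exact ⟨q, h1, h2, h3.trans hab, h4⟩
  refine ⟨hmono, convex_Ici 0, ?_⟩
  intro D1 hD1 D2 hD2 t s ht hs hts
  simp only [smul_eq_mul]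
  rw [hV D1, hV D2, hV (t * D1 + s * D2)]
  refine le_of_forall_pos_le_add fun ε hε => ?_
  obtain ⟨v1, hv1mem, hv1⟩ := Real.lt_sInf_add_pos (hne D1 hD1) hε
  obtain ⟨v2, hv2mem, hv2⟩ := Real.lt_sInf_add_pos (hne D2 hD2) hε
  obtain ⟨q1, hq1, hq1k, hq1D, rfl⟩ := hv1mem
  obtain ⟨q2, hq2, hq2k, hq2D, rfl⟩ := hv2mem
  set q : Fin n → ℝ := fun i => t * q1 i + s * q2 i with hqdef
  have hqpos : ∀ i, 0 < q i :=
    fun i => combo_pos' (hq1 i).1 (hq2 i).1 ht hs hts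
  have hqle : ∀ i, q i ≤ 1 := by
    intro i
    have h1 : t * q1 i ≤ t * 1 := mul_le_mul_of_nonneg_left (hq1 i).2 ht
    have h2 : s * q2 i ≤ s * 1 := mul_le_mul_of_nonneg_left (hq2 i).2 hs
    simp only [hqdef]; nlinarith
  have hqsum : ∑ i, q i = (k : ℝ) := by
    simp only [hqdef, Finset.sum_add_distrib, ← Finset.mul_sum, hq1k, hq2k]
    linear_combination (k : ℝ) * hts
  have hqD : ∑ i, |q i - p i| ≤ t * D1 + s * D2 := by
    have key : ∀ i, |q i - p i| ≤ t * |q1 i - p i| + s * |q2 i - p i| := by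
      intro i
      have : q i - p i = t * (q1 i - p i) + s * (q2 i - p i) := by
        simp only [hqdef]; linear_combination p i * hts
      rw [this]
      calc |t * (q1 i - p i) + s * (q2 i - p i)|
          ≤ |t * (q1 i - p i)| + |s * (q2 i - p i)| := abs_add_le _ _
        _ = t * |q1 i - p i| + s * |q2 i - p i| := by
            rw [abs_mul, abs_mul, abs_of_nonneg ht, abs_of_nonneg hs]
    calc ∑ i, |q i - p i| ≤ ∑ i, (t * |q1 i - p i| + s * |q2 i - p i|) :=
          Finset.sum_le_sum fun i _ => key i
      _ = t * ∑ i, |q1 i - p i| + s * ∑ i, |q2 i - p i| := by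
          rw [Finset.sum_add_distrib, Finset.mul_sum, Finset.mul_sum]
      _ ≤ t * D1 + s * D2 := by
          have := mul_le_mul_of_nonneg_left hq1D ht
          have := mul_le_mul_of_nonneg_left hq2D hs
          linarith
  have hmem : (∑ i, w i ^ 2 / q i) ∈ S (t * D1 + s * D2) :=
    ⟨q, fun i => ⟨hqpos i, hqle i⟩, hqsum, hqD, rfl⟩
  have hobj : ∑ i, w i ^ 2 / q i ≤
      t * (∑ i, w i ^ 2 / q1 i) + s * (∑ i, w i ^ 2 / q2 i) := by
    calc ∑ i, w i ^ 2 / q i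
        ≤ ∑ i, (t * (w i ^ 2 / q1 i) + s * (w i ^ 2 / q2 i)) :=
          Finset.sum_le_sum fun i _ =>
            div_combo_le (hq1 i).1 (hq2 i).1 ht hs hts (sq_nonneg (w i))
      _ = t * (∑ i, w i ^ 2 / q1 i) + s * (∑ i, w i ^ 2 / q2 i) := by
          rw [Finset.sum_add_distrib, Finset.mul_sum, Finset.mul_sum]
  have hle : sInf (S (t * D1 + s * D2)) ≤ ∑ i, w i ^ 2 / q i :=
    csInf_le (hbdd _) hmem
  have h1 : t * (∑ i, w i ^ 2 / q1 i) ≤ t * (sInf (S D1) + ε) :=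
    mul_le_mul_of_nonneg_left hv1.le ht
  have h2 : s * (∑ i, w i ^ 2 / q2 i) ≤ s * (sInf (S D2) + ε) :=
    mul_le_mul_of_nonneg_left hv2.le hs
  rw [mul_add] at h1 h2
  have heps : t * ε + s * ε = ε := by linear_combination ε * hts
  linarith
end

section
/- Let w ∈ ℝ^n with w_i > 0 for all i, let 1 ≤ k ≤ n, let p ∈ (0,1]^n with Σ_i p_i = k, and let D_max = ‖pps(k,w) − p‖₁. For each D ∈ [0, D_max] the Δ-stable PPS program has a unique optimal solution q(D), with q(0) = p and q(D_max) = pps(k,w); and the solutions are coordinatewise monotone in D: for every i and every 0 ≤ D ≤ D' ≤ D_max, q_i(D) lies in the closed interval with endpoints p_i and q_i(D'). In particular each coordinate q_i(D) moves monotonically from p_i toward the PPS probability pps(k,w)_i as D increases. -/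
/-!
The cost `∑ w i ^ 2 / q i` is strictly convex and the feasible set is convex, so optimal solutions
are unique; they exist because a coordinate near `0` makes the cost blow up, which confines the
minimization to a compact set. At budget `0` only `p` is feasible, and at the budget `Dmax` the
PPS vector is optimal even without the budget constraint, by the tangent-line inequality with the
Lagrange multiplier `τ ^ 2`.

For monotonicity let `q, q'` be optimal for budgets `D ≤ D'` and suppose `q i > max (p i) (q' i)`
(the other case is symmetric). If some `j` has `q j < q' j` and `p j < q' j`, moving a little mass
from `i` to `j` in `q` and from `j` to `i` in `q'` keeps both feasible, since each move brings a
coordinate closer to `p`, and by convexity of `c / x` it does not increase the total cost; by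
uniqueness the moved `q` would be `q` itself. Otherwise `(q' - p)⁺ ≤ (q - p)⁺` coordinatewise, so
`‖q' - p‖₁ ≤ ‖q - p‖₁ ≤ D`, and `q'` is optimal for the budget `D` as well, i.e. `q' = q`.
-/

open Finset Set

theorem strictConvexOn_univ_pi_sum {ι : Type*} [Fintype ι] {s : Set ℝ} {f : ι → ℝ → ℝ}
    (hf : ∀ i, StrictConvexOn ℝ s (f i)) :
    StrictConvexOn ℝ (univ.pi fun _ => s) (fun x : ι → ℝ => ∑ i, f i (x i)) := by
  refine ⟨convex_pi fun i _ => (hf i).1, fun x hx y hy hxy a b ha hb hab => ?_⟩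
  obtain ⟨i₀, hi₀⟩ := Function.ne_iff.mp hxy
  simp only [smul_eq_mul, mul_sum, ← sum_add_distrib, Pi.add_apply, Pi.smul_apply]
  refine sum_lt_sum (fun i _ => ?_) ⟨i₀, mem_univ _, ?_⟩
  · exact (hf i).convexOn.2 (hx i trivial) (hy i trivial) ha.le hb.le hab
  · exact (hf i₀).2 (hx i₀ trivial) (hy i₀ trivial) hi₀ ha hb hab

theorem strictConvexOn_const_div {c : ℝ} (hc : 0 < c) :
    StrictConvexOn ℝ (Ioi 0) fun x => c / x := by
  refine ⟨convex_Ioi 0, fun x hx y hy hxy a b ha hb hab => ?_⟩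
  have h := (strictConvexOn_zpow (m := -1) (by norm_num) (by norm_num)).2 hx hy hxy ha hb hab
  simp only [zpow_neg_one, smul_eq_mul, div_eq_mul_inv] at h ⊢
  nlinarith [mul_lt_mul_of_pos_left h hc]

theorem sum_abs_le_sum_abs_of_posPart_le {ι : Type*} [Fintype ι] {x y : ι → ℝ}
    (hsum : ∑ i, x i = ∑ i, y i) (h : ∀ i, (x i)⁺ ≤ (y i)⁺) : ∑ i, |x i| ≤ ∑ i, |y i| := by
  have habs : ∀ z : ι → ℝ, ∑ i, |z i| = 2 * ∑ i, (z i)⁺ - ∑ i, z i := fun z => by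
    rw [mul_sum, ← sum_sub_distrib]
    refine sum_congr rfl fun i _ => ?_
    linarith [posPart_add_negPart (z i), posPart_sub_negPart (z i)]
  rw [habs, habs, hsum]
  linarith [sum_le_sum fun i (_ : i ∈ Finset.univ) => h i]

theorem sum_abs_le_sum_abs_of_negPart_le {ι : Type*} [Fintype ι] {x y : ι → ℝ}
    (hsum : ∑ i, x i = ∑ i, y i) (h : ∀ i, (x i)⁻ ≤ (y i)⁻) : ∑ i, |x i| ≤ ∑ i, |y i| := by
  simpa only [Pi.neg_apply, abs_neg] using sum_abs_le_sum_abs_of_posPart_le (x := -x) (y := -y)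
    (by simp only [Pi.neg_apply, sum_neg_distrib, hsum]) fun i => by simpa using h i

theorem exists_pos_two_mul_le {a b c d : ℝ} (ha : 0 < a) (hb : 0 < b) (hc : 0 < c)
    (hd : 0 < d) :
    ∃ ε, 0 < ε ∧ 2 * ε ≤ a ∧ 2 * ε ≤ b ∧ 2 * ε ≤ c ∧ 2 * ε ≤ d :=
  ⟨min (min a b) (min c d) / 2, by positivity, by
    refine ⟨?_, ?_, ?_, ?_⟩ <;> linarith [min_le_left a b, min_le_right a b, min_le_left c d,
      min_le_right c d, min_le_left (min a b) (min c d), min_le_right (min a b) (min c d)]⟩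

theorem div_add_div_le_of_squeeze {c x y ε : ℝ} (hc : 0 ≤ c) (hx : 0 < x) (hε : 0 ≤ ε)
    (h : x + ε ≤ y - ε) : c / (x + ε) + c / (y - ε) ≤ c / x + c / y := by
  have hy : 0 < y := by linarith
  rw [div_add_div _ _ (by linarith) (by linarith), div_add_div _ _ hx.ne' hy.ne',
    div_le_div_iff₀ (by nlinarith) (by positivity)]
  nlinarith [mul_nonneg (mul_nonneg (mul_nonneg hc (by linarith : (0:ℝ) ≤ x + y)) hε)
    (by linarith : (0:ℝ) ≤ y - x - ε)]

theorem tangent_le_const_div {c s x : ℝ} (hc : 0 ≤ c) (hs : 0 < s) (hx : 0 < x) :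
    c / s - c / s ^ 2 * (x - s) ≤ c / x := by
  have key : c / x - (c / s - c / s ^ 2 * (x - s)) = c * (x - s) ^ 2 / (x * s ^ 2) := by
    field_simp; ring
  linarith [show 0 ≤ c * (x - s) ^ 2 / (x * s ^ 2) by positivity]

namespace StablePPS

variable {ι : Type*}

section Transfer

variable [DecidableEq ι] {q : ι → ℝ} {a b l : ι} {ε : ℝ}

noncomputable def transfer (q : ι → ℝ) (a b : ι) (ε : ℝ) : ι → ℝ :=
  q - Pi.single a ε + Pi.single b ε

theorem transfer_apply_left (hab : a ≠ b) : transfer q a b ε a = q a - ε := by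
  simp [transfer, hab]

theorem transfer_apply_right (hab : a ≠ b) : transfer q a b ε b = q b + ε := by
  simp [transfer, hab.symm]

theorem transfer_apply_of_ne (ha : l ≠ a) (hb : l ≠ b) : transfer q a b ε l = q l := by
  simp [transfer, ha, hb]

end Transfer

variable [Fintype ι]

noncomputable def cost (w q : ι → ℝ) : ℝ := ∑ i, w i ^ 2 / q i

def feasibleSet (K : ℝ) (p : ι → ℝ) (D : ℝ) : Set (ι → ℝ) :=
  {q | (∀ i, 0 < q i ∧ q i ≤ 1) ∧ ∑ i, q i = K ∧ ∑ i, |q i - p i| ≤ D}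

def IsOptimal (w : ι → ℝ) (K : ℝ) (p : ι → ℝ) (D : ℝ) (q : ι → ℝ) : Prop :=
  q ∈ feasibleSet K p D ∧ IsMinOn (cost w) (feasibleSet K p D) q

variable {w p q q' r : ι → ℝ} {K D D' : ℝ}

theorem feasibleSet_mono (h : D ≤ D') : feasibleSet K p D ⊆ feasibleSet K p D' :=
  fun _ hq => ⟨hq.1, hq.2.1, hq.2.2.trans h⟩

theorem eq_of_mem_feasibleSet_zero (hq : q ∈ feasibleSet K p 0) : q = p := by
  have h := (sum_eq_zero_iff_of_nonneg fun i _ => abs_nonneg (q i - p i)).mp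
    (le_antisymm hq.2.2 (sum_nonneg fun i _ => abs_nonneg _))
  funext i
  simpa [sub_eq_zero] using h i (mem_univ i)

theorem convex_feasibleSet : Convex ℝ (feasibleSet K p D) := by
  intro x hx y hy a b ha hb hab
  refine ⟨fun i => ?_, ?_, ?_⟩
  · exact convex_Ioc 0 1 (hx.1 i) (hy.1 i) ha hb hab
  · simp only [Pi.add_apply, Pi.smul_apply, smul_eq_mul, sum_add_distrib, ← mul_sum, hx.2.1,
      hy.2.1]
    rw [← add_mul, hab, one_mul]
  · calc ∑ i, |(a • x + b • y) i - p i| ≤ ∑ i, (a * |x i - p i| + b * |y i - p i|) := by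
          refine sum_le_sum fun i _ => ?_
          have e : (a • x + b • y) i - p i = a * (x i - p i) + b * (y i - p i) := by
            simp only [Pi.add_apply, Pi.smul_apply, smul_eq_mul]; linear_combination (p i) * hab
          rw [e]
          refine (abs_add_le _ _).trans_eq ?_
          rw [abs_mul, abs_mul, abs_of_nonneg ha, abs_of_nonneg hb]
      _ ≤ a * D + b * D := by
          rw [sum_add_distrib, ← mul_sum, ← mul_sum]
          gcongr
          exacts [hx.2.2, hy.2.2]
      _ = D := by rw [← add_mul, hab, one_mul]

theorem strictConvexOn_cost (hw : ∀ i, 0 < w i) :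
    StrictConvexOn ℝ (feasibleSet K p D) (cost w) :=
  (strictConvexOn_univ_pi_sum fun i => strictConvexOn_const_div (pow_pos (hw i) 2)).subset
    (fun _ hq i _ => (hq.1 i).1) convex_feasibleSet

theorem IsOptimal.eq_of_cost_le (hw : ∀ i, 0 < w i) (hq : IsOptimal w K p D q)
    (hr : r ∈ feasibleSet K p D) (hle : cost w r ≤ cost w q) : r = q :=
  (strictConvexOn_cost hw).eq_of_isMinOn (fun _ hs => hle.trans (hq.2 hs)) hq.2 hr hq.1

theorem IsOptimal.eq_of_mem_of_le (hw : ∀ i, 0 < w i) (hDD' : D ≤ D')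
    (hq : IsOptimal w K p D q) (hq' : IsOptimal w K p D' q') (hq'D : q' ∈ feasibleSet K p D) :
    q' = q :=
  hq.eq_of_cost_le hw hq'D (hq'.2 (feasibleSet_mono hDD' hq.1))

theorem exists_isMinOn_cost_of_isCompact {C : Set (ι → ℝ)} (hC : IsCompact C)
    (hw : ∀ i, 0 < w i) {x₀ : ι → ℝ} (hx₀C : x₀ ∈ C) (hx₀ : ∀ i, 0 < x₀ i) :
    ∃ q ∈ C ∩ {q | ∀ i, 0 < q i}, IsMinOn (cost w) (C ∩ {q | ∀ i, 0 < q i}) q := by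
  set M := cost w x₀
  have hM : 0 ≤ M := sum_nonneg fun i _ => by have := hx₀ i; positivity
  set e : ι → ℝ := fun i => w i ^ 2 / (M + 1)
  have he : ∀ i, 0 < e i := fun i => by have := hw i; positivity
  -- a single term `w i ^ 2 / q i` already exceeds `M + 1` once `q i < e i`
  have he_le : ∀ q : ι → ℝ, (∀ i, 0 < q i) → cost w q ≤ M + 1 → ∀ i, e i ≤ q i := by
    intro q hq hqM i
    have hi : w i ^ 2 / q i ≤ M + 1 :=
      (single_le_sum (fun l _ => by have := hq l; positivity) (mem_univ i)).trans hqM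
    rw [div_le_iff₀ (hq i)] at hi
    rwa [div_le_iff₀ (by positivity), mul_comm]
  set T := C ∩ univ.pi fun i => Ici (e i)
  have hT : IsCompact T := hC.inter_right (isClosed_set_pi fun i _ => isClosed_Ici)
  have hcont : ContinuousOn (cost w) T :=
    continuousOn_finsetSum _ fun i _ => continuousOn_const.div (continuous_apply i).continuousOn
      fun q hq => ((he i).trans_le (hq.2 i trivial)).ne'
  have hx₀T : x₀ ∈ T := ⟨hx₀C, fun i _ => he_le x₀ hx₀ (le_add_of_nonneg_right zero_le_one) i⟩
  obtain ⟨q, hqT, hqmin⟩ := hT.exists_isMinOn ⟨x₀, hx₀T⟩ hcont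
  refine ⟨q, ⟨hqT.1, fun i => (he i).trans_le (hqT.2 i trivial)⟩, fun r hr => ?_⟩
  by_cases hrM : cost w r ≤ M + 1
  · exact hqmin ⟨hr.1, fun i _ => he_le r hr.2 hrM i⟩
  · have hqM : cost w q ≤ M := hqmin hx₀T
    exact hqM.trans (by linarith)

theorem exists_isOptimal (hw : ∀ i, 0 < w i) {x₀ : ι → ℝ} (hx₀ : x₀ ∈ feasibleSet K p D) :
    ∃ q, IsOptimal w K p D q := by
  set C : Set (ι → ℝ) := (univ.pi fun _ => Icc 0 1) ∩
    ({q | ∑ i, q i = K} ∩ {q | ∑ i, |q i - p i| ≤ D})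
  have hC : IsCompact C :=
    (isCompact_univ_pi fun _ => isCompact_Icc).inter_right
      ((isClosed_eq (by fun_prop) continuous_const).inter
        (isClosed_le (by fun_prop) continuous_const))
  have hfeas : feasibleSet K p D = C ∩ {q | ∀ i, 0 < q i} := by
    ext q
    constructor
    · rintro ⟨hq, hsum, hD⟩
      exact ⟨⟨fun i _ => ⟨(hq i).1.le, (hq i).2⟩, hsum, hD⟩, fun i => (hq i).1⟩
    · rintro ⟨⟨hq, hsum, hD⟩, hpos⟩
      exact ⟨fun i => ⟨hpos i, (hq i trivial).2⟩, hsum, hD⟩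
  rw [hfeas] at hx₀
  simp only [IsOptimal, hfeas]
  exact exists_isMinOn_cost_of_isCompact hC hw hx₀.1 hx₀.2

theorem cost_pps_le {τ : ℝ} (hw : ∀ i, 0 < w i) (hτ : 0 < τ) (hr0 : ∀ i, 0 < r i)
    (hr1 : ∀ i, r i ≤ 1) (hsum : ∑ i, r i = ∑ i, min 1 (w i / τ)) :
    cost w (fun i => min 1 (w i / τ)) ≤ cost w r := by
  set s : ι → ℝ := fun i => min 1 (w i / τ)
  have hs : ∀ i, 0 < s i := fun i => lt_min one_pos (div_pos (hw i) hτ)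
  -- `τ ^ 2` is the Lagrange multiplier of `∑ q = k`; on capped coordinates the slope
  -- `w i ^ 2` is larger, which is harmless because there `r i - s i ≤ 0`
  have hslope : ∀ i, w i ^ 2 / s i ^ 2 * (r i - s i) ≤ τ ^ 2 * (r i - s i) := by
    intro i
    rcases le_or_gt (w i / τ) 1 with h | h
    · have hsi : s i = w i / τ := min_eq_right h
      have hwi := (hw i).ne'
      rw [hsi, show w i ^ 2 / (w i / τ) ^ 2 = τ ^ 2 by field_simp]
    · have hsi : s i = 1 := min_eq_left h.le
      have hτw : τ < w i := (one_lt_div hτ).mp h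
      have hsq : τ ^ 2 ≤ w i ^ 2 := pow_le_pow_left₀ hτ.le hτw.le 2
      rw [hsi, one_pow, div_one]
      nlinarith [mul_nonneg (sub_nonneg.mpr hsq) (sub_nonneg.mpr (hr1 i))]
  calc cost w s = ∑ i, (w i ^ 2 / s i - τ ^ 2 * (r i - s i)) := by
        rw [sum_sub_distrib, ← mul_sum, sum_sub_distrib, hsum, sub_self, mul_zero, sub_zero]; rfl
    _ ≤ ∑ i, (w i ^ 2 / s i - w i ^ 2 / s i ^ 2 * (r i - s i)) :=
        sum_le_sum fun i _ => by linarith [hslope i]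
    _ ≤ cost w r := sum_le_sum fun i _ => tangent_le_const_div (sq_nonneg _) (hs i) (hr0 i)

section Exchange

variable [DecidableEq ι] {a b : ι} {ε : ℝ}

theorem sum_transfer_sub (hab : a ≠ b) (f : ι → ℝ → ℝ) :
    ∑ l, f l (transfer q a b ε l) - ∑ l, f l (q l) =
      (f a (q a - ε) - f a (q a)) + (f b (q b + ε) - f b (q b)) := by
  rw [← sum_sub_distrib, Fintype.sum_eq_add a b hab fun l hl => by
    rw [transfer_apply_of_ne hl.1 hl.2, sub_self], transfer_apply_left hab,
    transfer_apply_right hab]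

theorem transfer_mem_feasibleSet (hq : q ∈ feasibleSet K p D) (hab : a ≠ b) (hε : 0 ≤ ε)
    (ha : ε < q a) (hb : q b + ε ≤ 1) (htoward : p a + ε ≤ q a ∨ q b + ε ≤ p b) :
    transfer q a b ε ∈ feasibleSet K p D := by
  refine ⟨fun l => ?_, ?_, ?_⟩
  · obtain ⟨hql, hql'⟩ := hq.1 l
    by_cases hla : l = a
    · subst hla; rw [transfer_apply_left hab]; constructor <;> linarith
    by_cases hlb : l = b
    · subst hlb; rw [transfer_apply_right hab]; constructor <;> linarith
    rw [transfer_apply_of_ne hla hlb]; exact ⟨hql, hql'⟩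
  · linarith [sum_transfer_sub (q := q) (ε := ε) hab fun _ x => x, hq.2.1]
  · have hsum := sum_transfer_sub (q := q) (ε := ε) hab fun l x => |x - p l|
    have hda : |q a - ε - p a| - |q a - p a| ≤ ε := by
      simpa [abs_of_nonneg hε] using abs_sub_abs_le_abs_sub (q a - ε - p a) (q a - p a)
    have hdb : |q b + ε - p b| - |q b - p b| ≤ ε := by
      simpa [abs_of_nonneg hε] using abs_sub_abs_le_abs_sub (q b + ε - p b) (q b - p b)
    have := hq.2.2
    rcases htoward with h | h
    · rw [abs_of_nonneg (by linarith : 0 ≤ q a - ε - p a),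
        abs_of_nonneg (by linarith : 0 ≤ q a - p a)] at hsum
      linarith
    · rw [abs_of_nonpos (by linarith : q b + ε - p b ≤ 0),
        abs_of_nonpos (by linarith : q b - p b ≤ 0)] at hsum
      linarith

theorem false_of_exchange (hw : ∀ i, 0 < w i) (hq : IsOptimal w K p D q)
    (hq' : IsOptimal w K p D' q') (hab : a ≠ b) (hε : 0 < ε)
    (hgap_a : q' a + ε ≤ q a - ε) (hgap_b : q b + ε ≤ q' b - ε)
    (htoward : p a + ε ≤ q a ∨ q b + ε ≤ p b) (htoward' : p b + ε ≤ q' b ∨ q' a + ε ≤ p a) :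
    False := by
  obtain ⟨hq'a, hq'b⟩ := And.intro (hq'.1.1 a) (hq'.1.1 b)
  obtain ⟨hqa, hqb⟩ := And.intro (hq.1.1 a) (hq.1.1 b)
  have ht := transfer_mem_feasibleSet hq.1 hab hε.le (by linarith) (by linarith) htoward
  have ht' := transfer_mem_feasibleSet hq'.1 hab.symm hε.le (by linarith) (by linarith)
    htoward'
  have hcost := sum_transfer_sub (q := q) (ε := ε) hab fun l x => w l ^ 2 / x
  have hcost' := sum_transfer_sub (q := q') (ε := ε) hab.symm fun l x => w l ^ 2 / x
  have hsqueeze_a := div_add_div_le_of_squeeze (sq_nonneg (w a)) hq'a.1 hε.le hgap_a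
  have hsqueeze_b := div_add_div_le_of_squeeze (sq_nonneg (w b)) hqb.1 hε.le hgap_b
  have hle : cost w (transfer q a b ε) ≤ cost w q := by
    have : cost w q' ≤ cost w (transfer q' b a ε) := hq'.2 ht'
    simp only [cost] at this hcost hcost' ⊢
    linarith
  have := congrFun (hq.eq_of_cost_le hw ht hle) a
  rw [transfer_apply_left hab] at this
  linarith

end Exchange

theorem IsOptimal.le_max (hw : ∀ i, 0 < w i) (hDD' : D ≤ D') (hq : IsOptimal w K p D q)
    (hq' : IsOptimal w K p D' q') (i : ι) : q i ≤ max (p i) (q' i) := by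
  classical
  by_contra! h
  obtain ⟨hpi, hq'i⟩ := max_lt_iff.mp h
  by_cases hj : ∃ j, p j < q' j ∧ q j < q' j
  · obtain ⟨j, hpj, hqj⟩ := hj
    have hij : i ≠ j := by rintro rfl; linarith
    obtain ⟨ε, hε, h₁, h₂, h₃, h₄⟩ := exists_pos_two_mul_le (sub_pos.mpr hq'i) (sub_pos.mpr hpi)
      (sub_pos.mpr hqj) (sub_pos.mpr hpj)
    exact false_of_exchange hw hq hq' hij hε (by linarith) (by linarith)
      (.inl (by linarith)) (.inl (by linarith))
  · push Not at hj
    have hq'D : q' ∈ feasibleSet K p D := by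
      refine ⟨hq'.1.1, hq'.1.2.1,
        le_trans (sum_abs_le_sum_abs_of_posPart_le ?_ fun l => ?_) hq.1.2.2⟩
      · rw [sum_sub_distrib, sum_sub_distrib, hq'.1.2.1, hq.1.2.1]
      · rcases le_or_gt (q' l) (p l) with h | h
        · rw [posPart_eq_zero.mpr (sub_nonpos.mpr h)]; exact posPart_nonneg _
        · exact posPart_mono (by linarith [hj l h])
    have := congrFun (hq.eq_of_mem_of_le hw hDD' hq' hq'D) i
    linarith

theorem IsOptimal.min_le (hw : ∀ i, 0 < w i) (hDD' : D ≤ D') (hq : IsOptimal w K p D q)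
    (hq' : IsOptimal w K p D' q') (i : ι) : min (p i) (q' i) ≤ q i := by
  classical
  by_contra! h
  obtain ⟨hpi, hq'i⟩ := lt_min_iff.mp h
  by_cases hj : ∃ j, q' j < p j ∧ q' j < q j
  · obtain ⟨j, hpj, hqj⟩ := hj
    have hij : j ≠ i := by rintro rfl; linarith
    obtain ⟨ε, hε, h₁, h₂, h₃, h₄⟩ := exists_pos_two_mul_le (sub_pos.mpr hqj) (sub_pos.mpr hpj)
      (sub_pos.mpr hq'i) (sub_pos.mpr hpi)
    exact false_of_exchange hw hq hq' hij hε (by linarith) (by linarith)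
      (.inr (by linarith)) (.inr (by linarith))
  · push Not at hj
    have hq'D : q' ∈ feasibleSet K p D := by
      refine ⟨hq'.1.1, hq'.1.2.1,
        le_trans (sum_abs_le_sum_abs_of_negPart_le ?_ fun l => ?_) hq.1.2.2⟩
      · rw [sum_sub_distrib, sum_sub_distrib, hq'.1.2.1, hq.1.2.1]
      · rcases le_or_gt (p l) (q' l) with h | h
        · rw [negPart_eq_zero.mpr (sub_nonneg.mpr h)]; exact negPart_nonneg _
        · exact negPart_anti (by linarith [hj l h])
    have := congrFun (hq.eq_of_mem_of_le hw hDD' hq' hq'D) i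
    linarith

theorem IsOptimal.mem_uIcc (hw : ∀ i, 0 < w i) (hDD' : D ≤ D') (hq : IsOptimal w K p D q)
    (hq' : IsOptimal w K p D' q') (i : ι) : q i ∈ uIcc (p i) (q' i) :=
  ⟨hq.min_le hw hDD' hq' i, hq.le_max hw hDD' hq' i⟩

end StablePPS

theorem delta_stable_pps_unique_monotone_general (n k : ℕ) (w p : Fin n → ℝ)
    (hw : ∀ i, 0 < w i)
    (hp0 : ∀ i, 0 < p i) (hp1 : ∀ i, p i ≤ 1) (hpk : ∑ i, p i = (k : ℝ))
    (τ : ℝ) (hτ : 0 < τ) (hτk : ∑ i, min 1 (w i / τ) = (k : ℝ)) :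
    let ppsv : Fin n → ℝ := fun i => min 1 (w i / τ)
    let Dmax : ℝ := ∑ i, |ppsv i - p i|
    let Feas : ℝ → (Fin n → ℝ) → Prop := fun D q =>
      (∀ i, 0 < q i ∧ q i ≤ 1) ∧ (∑ i, q i = (k : ℝ)) ∧ (∑ i, |q i - p i| ≤ D)
    ∃ Q : ℝ → Fin n → ℝ,
      (∀ D, 0 ≤ D → D ≤ Dmax →
        Feas D (Q D) ∧
        ∀ q : Fin n → ℝ, Feas D q →
          (∑ i, w i ^ 2 / Q D i ≤ ∑ i, w i ^ 2 / q i) ∧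
          ((∑ i, w i ^ 2 / q i = ∑ i, w i ^ 2 / Q D i) → q = Q D)) ∧
      Q 0 = p ∧ Q Dmax = ppsv ∧
      (∀ (i : Fin n) (D D' : ℝ), 0 ≤ D → D ≤ D' → D' ≤ Dmax →
        Q D i ∈ Set.uIcc (p i) (Q D' i)) := by
  intro ppsv Dmax Feas
  have hp : ∀ D, 0 ≤ D → p ∈ StablePPS.feasibleSet (k : ℝ) p D := fun D hD =>
    ⟨fun i => ⟨hp0 i, hp1 i⟩, hpk, by simpa using hD⟩
  choose! Q hQ using fun D (hD : 0 ≤ D) => StablePPS.exists_isOptimal hw (hp D hD)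
  have hDmax : 0 ≤ Dmax := sum_nonneg fun i _ => abs_nonneg _
  have hpps : ppsv ∈ StablePPS.feasibleSet (k : ℝ) p Dmax :=
    ⟨fun i => ⟨lt_min one_pos (div_pos (hw i) hτ), min_le_left _ _⟩, hτk, le_rfl⟩
  refine ⟨Q, fun D hD _ => ?_, StablePPS.eq_of_mem_feasibleSet_zero (hQ 0 le_rfl).1, ?_,
    fun i D D' hD hDD' _ => (hQ D hD).mem_uIcc hw hDD' (hQ D' (hD.trans hDD')) i⟩
  · exact ⟨(hQ D hD).1, fun q hq =>
      ⟨(hQ D hD).2 hq, fun h => (hQ D hD).eq_of_cost_le hw hq h.le⟩⟩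
  · obtain ⟨hQ01, hQsum, -⟩ := (hQ Dmax hDmax).1
    refine ((hQ Dmax hDmax).eq_of_cost_le hw hpps ?_).symm
    exact StablePPS.cost_pps_le hw hτ (fun i => (hQ01 i).1) (fun i => (hQ01 i).2)
      (hQsum.trans hτk.symm)

/-- **Uniqueness and coordinatewise monotonicity of the Δ-stable PPS solutions.**
For weights `w i > 0`, `1 ≤ k ≤ n`, current probabilities `p ∈ (0,1]^n` with `∑ p = k`,
and `Dmax = ‖pps(k,w) − p‖₁` (where `pps(k,w) i = min 1 (w i / τ)` for a threshold
`τ > 0` with `∑ i, min 1 (w i / τ) = k`): for each `D ∈ [0, Dmax]` the Δ-stable PPS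
program has a unique optimal solution `Q D`, with `Q 0 = p`, `Q Dmax = pps(k,w)`, and
for all `0 ≤ D ≤ D' ≤ Dmax` and every `i`, `Q D i` lies in the closed interval with
endpoints `p i` and `Q D' i`. -/
theorem delta_stable_pps_unique_monotone (n k : ℕ) (w p : Fin n → ℝ)
    (hw : ∀ i, 0 < w i) (hk1 : 1 ≤ k) (hkn : k ≤ n)
    (hp0 : ∀ i, 0 < p i) (hp1 : ∀ i, p i ≤ 1) (hpk : ∑ i, p i = (k : ℝ))
    (τ : ℝ) (hτ : 0 < τ) (hτk : ∑ i, min 1 (w i / τ) = (k : ℝ)) :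
    let ppsv : Fin n → ℝ := fun i => min 1 (w i / τ)
    let Dmax : ℝ := ∑ i, |ppsv i - p i|
    let Feas : ℝ → (Fin n → ℝ) → Prop := fun D q =>
      (∀ i, 0 < q i ∧ q i ≤ 1) ∧ (∑ i, q i = (k : ℝ)) ∧ (∑ i, |q i - p i| ≤ D)
    ∃ Q : ℝ → Fin n → ℝ,
      (∀ D, 0 ≤ D → D ≤ Dmax →
        Feas D (Q D) ∧
        ∀ q : Fin n → ℝ, Feas D q →
          (∑ i, w i ^ 2 / Q D i ≤ ∑ i, w i ^ 2 / q i) ∧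
          ((∑ i, w i ^ 2 / q i = ∑ i, w i ^ 2 / Q D i) → q = Q D)) ∧
      Q 0 = p ∧ Q Dmax = ppsv ∧
      (∀ (i : Fin n) (D D' : ℝ), 0 ≤ D → D ≤ D' → D' ≤ Dmax →
        Q D i ∈ Set.uIcc (p i) (Q D' i)) :=
  delta_stable_pps_unique_monotone_general n k w p hw hp0 hp1 hpk τ hτ hτk
end

section
/- Let x ∈ ℝ^n and let S ⊆ {1,…,n} with |S| = k, where k ≤ n − k. Enumerate S as i_1, …, i_k with x_{i_1} ≤ x_{i_2} ≤ … ≤ x_{i_k}, and enumerate the k largest-valued elements of the complement of S as j_1, …, j_k with x_{j_1} ≥ x_{j_2} ≥ … ≥ x_{j_k}. Then for every h ∈ {0, 1, …, k}: max { Σ_{i∈S'} x_i : S' ⊆ {1,…,n}, |S'| = k, |S'\S| ≤ h } = Σ_{i∈S} x_i + Σ_{l=1}^{h} max(0, x_{j_l} − x_{i_l}). That is, the Δ-stable top-k optimum is obtained by performing the most beneficial swaps in order, swapping out the lightest current items for the heaviest outside items. -/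
/-!
Trading `t` elements of `S` for `t` outside elements changes the value by the sum of the
added values minus the sum of the removed ones. The added values sum to at most those of
`j 0, …, j (t-1)` and the removed ones to at least those of `i 0, …, i (t-1)`, so the gain is
at most `∑_{l<t} (x (j l) - x (i l)) ≤ ∑_{l<h} max 0 (x (j l) - x (i l))`; performing exactly
the profitable swaps among the first `h` pairs attains this bound.
Both prefix bounds compare two sets of equal size in which every element of the first outside
the second lies below every element of the second outside the first.
-/

open Finset

namespace Finset

variable {ι M : Type*} [AddCommMonoid M] [PartialOrder M] [IsOrderedAddMonoid M]

theorem sum_le_sum_of_card_eq_of_forall_le {s t : Finset ι} {f : ι → M} (hst : #s = #t)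
    (h : ∀ a ∈ s, ∀ b ∈ t, f a ≤ f b) : ∑ a ∈ s, f a ≤ ∑ b ∈ t, f b := by
  let e : s ≃ t := Finset.equivOfCardEq hst
  rw [← sum_coe_sort s, ← sum_coe_sort t, ← e.sum_comp (fun b : t => f b)]
  exact sum_le_sum fun a _ => h a a.2 (e a) (e a).2

theorem sum_le_sum_of_card_eq_of_forall_sdiff_le [DecidableEq ι] {s t : Finset ι} {f : ι → M}
    (hst : #s = #t) (h : ∀ a ∈ s \ t, ∀ b ∈ t \ s, f a ≤ f b) :
    ∑ a ∈ s, f a ≤ ∑ b ∈ t, f b := by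
  rw [← sum_inter_add_sum_sdiff s t, ← sum_inter_add_sum_sdiff t s, inter_comm]
  exact add_le_add le_rfl (sum_le_sum_of_card_eq_of_forall_le (card_sdiff_comm hst) h)

end Finset

section StableTopK

variable {α : Type*} [DecidableEq α] (x : α → ℝ) {k : ℕ} {S : Finset α} {i j : Fin k → α}

theorem sum_prefix_le_sum_of_subset_range (hi_inj : Function.Injective i)
    (hi_mono : Monotone fun l => x (i l)) {B : Finset α} (hB : B ⊆ univ.image i) :
    ∑ l ∈ univ.filter (fun l : Fin k => (l : ℕ) < #B), x (i l) ≤ ∑ b ∈ B, x b := by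
  have hBk : #B ≤ k := (card_le_card hB).trans (card_image_le.trans_eq (card_fin k))
  rw [← sum_image fun _ _ _ _ hab => hi_inj hab]
  refine sum_le_sum_of_card_eq_of_forall_sdiff_le ?_ fun a ha b hb => ?_
  · rw [card_image_of_injective _ hi_inj, Fin.card_filter_val_lt, min_eq_right hBk]
  obtain ⟨l, hl, rfl⟩ := mem_image.mp (mem_sdiff.mp ha).1
  obtain ⟨hbB, hbA⟩ := mem_sdiff.mp hb
  obtain ⟨l', -, rfl⟩ := mem_image.mp (hB hbB)
  have hl' : ¬ (l' : ℕ) < #B := fun h => hbA (mem_image_of_mem i (by simpa using h))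
  exact hi_mono (Fin.le_def.mpr (by simp only [mem_filter, mem_univ, true_and] at hl; omega))

theorem sum_le_sum_prefix_of_disjoint (hj_inj : Function.Injective j)
    (hj_anti : Antitone fun l => x (j l))
    (hj_top : ∀ m, m ∉ S → (∀ l, j l ≠ m) → ∀ l, x m ≤ x (j l))
    {A : Finset α} (hA : Disjoint A S) (hAk : #A ≤ k) :
    ∑ a ∈ A, x a ≤ ∑ l ∈ univ.filter (fun l : Fin k => (l : ℕ) < #A), x (j l) := by
  rw [← sum_image fun _ _ _ _ hab => hj_inj hab]
  refine sum_le_sum_of_card_eq_of_forall_sdiff_le ?_ fun a ha b hb => ?_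
  · rw [card_image_of_injective _ hj_inj, Fin.card_filter_val_lt, min_eq_right hAk]
  obtain ⟨l, hl, rfl⟩ := mem_image.mp (mem_sdiff.mp hb).1
  obtain ⟨haA, haB⟩ := mem_sdiff.mp ha
  by_cases hrange : ∃ l', j l' = a
  · obtain ⟨l', rfl⟩ := hrange
    have hl' : ¬ (l' : ℕ) < #A := fun h => haB (mem_image_of_mem j (by simpa using h))
    exact hj_anti (Fin.le_def.mpr (by simp only [mem_filter, mem_univ, true_and] at hl; omega))
  · exact hj_top a (disjoint_left.mp hA haA) (fun l' h => hrange ⟨l', h⟩) l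

theorem sum_le_sum_add_sum_max_of_card_sdiff_le (hS : univ.image i = S)
    (hi_inj : Function.Injective i) (hi_mono : Monotone fun l => x (i l))
    (hj_inj : Function.Injective j) (hj_anti : Antitone fun l => x (j l))
    (hj_top : ∀ m, m ∉ S → (∀ l, j l ≠ m) → ∀ l, x m ≤ x (j l))
    {S' : Finset α} (hS' : #S' = k) {h : ℕ} (hh : #(S' \ S) ≤ h) :
    ∑ m ∈ S', x m ≤ ∑ m ∈ S, x m +
      ∑ l ∈ univ.filter (fun l : Fin k => (l : ℕ) < h), max 0 (x (j l) - x (i l)) := by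
  have hcard : #(S \ S') = #(S' \ S) :=
    card_sdiff_comm (by rw [hS', ← hS, card_image_of_injective _ hi_inj, card_fin])
  have hadded := sum_le_sum_prefix_of_disjoint x hj_inj hj_anti hj_top sdiff_disjoint
    (hS' ▸ card_le_card sdiff_subset)
  have hremoved := sum_prefix_le_sum_of_subset_range x hi_inj hi_mono
    (hS ▸ sdiff_subset : S \ S' ⊆ univ.image i)
  rw [hcard] at hremoved
  have hgain : ∑ l ∈ univ.filter (fun l : Fin k => (l : ℕ) < #(S' \ S)), (x (j l) - x (i l)) ≤
      ∑ l ∈ univ.filter (fun l : Fin k => (l : ℕ) < h), max 0 (x (j l) - x (i l)) :=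
    (sum_le_sum fun _ _ => le_max_right _ _).trans <|
      sum_le_sum_of_subset_of_nonneg
        (fun l hl => mem_filter.2 ⟨mem_univ l, (mem_filter.1 hl).2.trans_le hh⟩)
        fun _ _ _ => le_max_left _ _
  rw [sum_sub_distrib] at hgain
  linarith [sum_sdiff_sub_sum_sdiff (s₂ := S') (s₁ := S) (f := x)]

theorem exists_card_sdiff_le_sum_eq (hi_inj : Function.Injective i) (hi_mem : ∀ l, i l ∈ S)
    (hj_inj : Function.Injective j) (hj_mem : ∀ l, j l ∉ S) (h : ℕ) :
    ∃ S' : Finset α, #S' = #S ∧ #(S' \ S) ≤ h ∧ ∑ m ∈ S', x m = ∑ m ∈ S, x m +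
      ∑ l ∈ univ.filter (fun l : Fin k => (l : ℕ) < h), max 0 (x (j l) - x (i l)) := by
  set L := (univ.filter fun l : Fin k => (l : ℕ) < h).filter fun l => x (i l) < x (j l)
  have hI : L.image i ⊆ S := image_subset_iff.2 fun l _ => hi_mem l
  have hJ : Disjoint (L.image j) S := disjoint_left.2 fun a ha => by
    obtain ⟨l, -, rfl⟩ := mem_image.1 ha
    exact hj_mem l
  have hdisj : Disjoint (S \ L.image i) (L.image j) := hJ.symm.mono_left sdiff_subset
  have hcardI : #(L.image i) = #L := card_image_of_injective _ hi_inj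
  have hcardJ : #(L.image j) = #L := card_image_of_injective _ hj_inj
  refine ⟨(S \ L.image i) ∪ L.image j, ?_, ?_, ?_⟩
  · rw [card_union_of_disjoint hdisj, card_sdiff_of_subset hI, hcardI, hcardJ]
    have := card_le_card hI
    omega
  · have hsub : ((S \ L.image i) ∪ L.image j) \ S ⊆ L.image j := by
      intro a
      simp only [mem_sdiff, mem_union]
      tauto
    have hL : #L ≤ h := (card_le_card (filter_subset _ _)).trans
      (Fin.card_filter_val_lt.trans_le (min_le_right _ _))
    exact (card_le_card hsub).trans (hcardJ.trans_le hL)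
  · have hgain : ∑ l ∈ univ.filter (fun l : Fin k => (l : ℕ) < h), max 0 (x (j l) - x (i l)) =
        ∑ l ∈ L, (x (j l) - x (i l)) := by
      rw [sum_filter fun l => x (i l) < x (j l)]
      refine sum_congr rfl fun l _ => ?_
      split_ifs with hl
      exacts [max_eq_right (by linarith), max_eq_left (by linarith)]
    rw [sum_union hdisj, sum_sdiff_eq_sub hI, sum_image fun _ _ _ _ hab => hi_inj hab,
      sum_image fun _ _ _ _ hab => hj_inj hab, hgain, sum_sub_distrib]
    ring

end StableTopK

theorem delta_stable_top_k_general (n k : ℕ) (x : Fin n → ℝ) (S : Finset (Fin n))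
    (hS : S.card = k) (i j : Fin k → Fin n)
    (hi_inj : Function.Injective i) (hi_mem : ∀ l, i l ∈ S)
    (hi_mono : Monotone fun l => x (i l))
    (hj_inj : Function.Injective j) (hj_mem : ∀ l, j l ∉ S)
    (hj_anti : Antitone fun l => x (j l))
    (hj_top : ∀ m, m ∉ S → (∀ l, j l ≠ m) → ∀ l, x m ≤ x (j l))
    (h : ℕ) :
    IsGreatest
      {v : ℝ | ∃ S' : Finset (Fin n), S'.card = k ∧ (S' \ S).card ≤ h ∧
        v = ∑ m ∈ S', x m}
      (∑ m ∈ S, x m +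
        ∑ l ∈ Finset.univ.filter (fun l : Fin k => (l : ℕ) < h),
          max 0 (x (j l) - x (i l))) := by
  have hS_range : univ.image i = S :=
    eq_of_subset_of_card_le (image_subset_iff.2 fun l _ => hi_mem l)
      (by rw [hS, card_image_of_injective _ hi_inj, card_fin])
  refine ⟨?_, ?_⟩
  · obtain ⟨S', hcard, hdel, hsum⟩ := exists_card_sdiff_le_sum_eq x hi_inj hi_mem hj_inj hj_mem h
    exact ⟨S', hcard.trans hS, hdel, hsum.symm⟩
  · rintro _ ⟨S', hS', hdel, rfl⟩
    exact sum_le_sum_add_sum_max_of_card_sdiff_le x hS_range hi_inj hi_mono hj_inj hj_anti hj_top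
      hS' hdel

/-- **The Δ-stable top-k optimum is obtained by the most beneficial swaps.**
Let `|S| = k ≤ n - k`, let `i` enumerate `S` in nondecreasing order of value, and let
`j` enumerate the `k` largest-valued elements of the complement of `S` in nonincreasing
order of value.  Then for every `h ≤ k`, the maximum of `∑_{m∈S'} x m` over `k`-element
sets `S'` with `|S' \ S| ≤ h` equals
`∑_{m∈S} x m + ∑_{l < h} max 0 (x (j l) - x (i l))`. -/
theorem delta_stable_top_k (n k : ℕ) (x : Fin n → ℝ) (S : Finset (Fin n))
    (hS : S.card = k) (hk : k ≤ n - k) (i j : Fin k → Fin n)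
    (hi_inj : Function.Injective i) (hi_mem : ∀ l, i l ∈ S)
    (hi_mono : Monotone fun l => x (i l))
    (hj_inj : Function.Injective j) (hj_mem : ∀ l, j l ∉ S)
    (hj_anti : Antitone fun l => x (j l))
    (hj_top : ∀ m, m ∉ S → (∀ l, j l ≠ m) → ∀ l, x m ≤ x (j l))
    (h : ℕ) (hh : h ≤ k) :
    IsGreatest
      {v : ℝ | ∃ S' : Finset (Fin n), S'.card = k ∧ (S' \ S).card ≤ h ∧
        v = ∑ m ∈ S', x m}
      (∑ m ∈ S, x m +
        ∑ l ∈ Finset.univ.filter (fun l : Fin k => (l : ℕ) < h),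
          max 0 (x (j l) - x (i l))) :=
  delta_stable_top_k_general n k x S hS i j hi_inj hi_mem hi_mono hj_inj hj_mem hj_anti hj_top h
end

section
/- Let x ∈ ℝ^n and let S ⊆ {1,…,n} with |S| = k ≤ n − k. Define g(h) = max { Σ_{i∈S'} x_i : S' ⊆ {1,…,n}, |S'| = k, |S'\S| ≤ h } for h ∈ {0, 1, …, k}. Then g is concave as a function on {0,…,k}: for every 1 ≤ h ≤ k−1, g(h+1) − g(h) ≤ g(h) − g(h−1). That is, the stability–fit tradeoff of stable top-k is concave: the marginal fitness gain per additional allowed swap is non-increasing. -/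
/-- **The stability–fit tradeoff of stable top-k is concave.**
Let `|S| = k ≤ n - k` and let `g h` be the maximum of `∑_{m∈S'} x m` over `k`-element
subsets `S'` with `|S' \ S| ≤ h`.  Then for every `1 ≤ h ≤ k - 1`,
`g (h+1) - g h ≤ g h - g (h-1)`: the marginal fitness gain per additional allowed swap
is non-increasing. -/
theorem top_k_tradeoff_concave (n k : ℕ) (x : Fin n → ℝ) (S : Finset (Fin n))
    (hS : S.card = k) (hk : k ≤ n - k) (g : ℕ → ℝ)
    (hg : ∀ h : ℕ, g h = sSup {v : ℝ | ∃ S' : Finset (Fin n),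
      S'.card = k ∧ (S' \ S).card ≤ h ∧ v = ∑ m ∈ S', x m})
    (h : ℕ) (h1 : 1 ≤ h) (h2 : h ≤ k - 1) :
    g (h + 1) - g h ≤ g h - g (h - 1) := by
  set V : ℕ → Set ℝ := fun j => {v : ℝ | ∃ S' : Finset (Fin n),
      S'.card = k ∧ (S' \ S).card ≤ j ∧ v = ∑ m ∈ S', x m} with hV
  have hfin : ∀ j, (V j).Finite := by
    intro j
    apply Set.Finite.subset (Set.finite_range (fun S' : Finset (Fin n) => ∑ m ∈ S', x m))
    rintro v ⟨S', _, _, rfl⟩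
    exact ⟨S', rfl⟩
  have hne : ∀ j, (V j).Nonempty := fun j => ⟨_, S, hS, by simp, rfl⟩
  have hmem : ∀ j, g j ∈ V j := fun j => by
    rw [hg]; exact (hne j).csSup_mem (hfin j)
  have hub : ∀ j v, v ∈ V j → v ≤ g j := fun j v hv => by
    rw [hg]; exact le_csSup ((hfin j).bddAbove) hv
  obtain ⟨A, hAcard, hAle, hAsum⟩ := hmem (h + 1)
  obtain ⟨B, hBcard, hBle, hBsum⟩ := hmem (h - 1)
  -- goal reduces to g (h+1) + g (h-1) ≤ g h + g h
  rw [sub_le_sub_iff]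
  by_cases hcase : (A \ S).card ≤ h
  · have h3 : g (h + 1) ≤ g h := by
      rw [hAsum]; exact hub h _ ⟨A, hAcard, hcase, rfl⟩
    have h4 : g (h - 1) ≤ g h := by
      rw [hBsum]; exact hub h _ ⟨B, hBcard, le_trans hBle (by omega), rfl⟩
    linarith
  · have hAeq : (A \ S).card = h + 1 := by omega
    -- find a ∈ (A \ S) \ B
    have hsub1 : (A \ S) ∩ B ⊆ B \ S := by
      intro y hy
      simp only [Finset.mem_inter, Finset.mem_sdiff] at *
      tauto
    have hane : ((A \ S) \ B).Nonempty := by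
      rw [← Finset.card_pos]
      have c1 : ((A \ S) ∩ B).card ≤ (B \ S).card := Finset.card_le_card hsub1
      have c2 : ((A \ S) \ B).card + ((A \ S) ∩ B).card = (A \ S).card :=
        Finset.card_sdiff_add_card_inter _ _
      omega
    obtain ⟨a, ha⟩ := hane
    simp only [Finset.mem_sdiff] at ha
    obtain ⟨⟨haA, haS⟩, haB⟩ := ha
    -- find b ∈ (B ∩ S) \ A
    have cAS : (A ∩ S).card + (A \ S).card = A.card := Finset.card_inter_add_card_sdiff _ _
    have cBS : (B ∩ S).card + (B \ S).card = B.card := Finset.card_inter_add_card_sdiff _ _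
    have hbne : ((B ∩ S) \ A).Nonempty := by
      rw [← Finset.card_pos]
      by_contra hcon
      have : (B ∩ S) ⊆ A := by
        intro y hy
        by_contra hyA
        exact hcon (Finset.card_pos.mpr ⟨y, Finset.mem_sdiff.mpr ⟨hy, hyA⟩⟩)
      have : (B ∩ S) ⊆ A ∩ S := fun y hy => Finset.mem_inter.mpr
        ⟨this hy, (Finset.mem_inter.mp hy).2⟩
      have := Finset.card_le_card this
      omega
    obtain ⟨b, hb⟩ := hbne
    simp only [Finset.mem_sdiff, Finset.mem_inter] at hb
    obtain ⟨⟨hbB, hbS⟩, hbA⟩ := hb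
    have hab : a ≠ b := fun e => haS (e ▸ hbS)
    set A' := insert b (A.erase a) with hA'
    set B' := insert a (B.erase b) with hB'
    have hbA' : b ∉ A.erase a := fun hx => hbA (Finset.mem_of_mem_erase hx)
    have haB' : a ∉ B.erase b := fun hx => haB (Finset.mem_of_mem_erase hx)
    have hA'card : A'.card = k := by
      rw [hA', Finset.card_insert_of_notMem hbA', Finset.card_erase_of_mem haA]
      omega
    have hB'card : B'.card = k := by
      rw [hB', Finset.card_insert_of_notMem haB', Finset.card_erase_of_mem hbB]
      omega
    have hA'sd : A' \ S = (A \ S).erase a := by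
      ext y
      simp only [hA', Finset.mem_sdiff, Finset.mem_insert, Finset.mem_erase]
      constructor
      · rintro ⟨(rfl | ⟨hy1, hy2⟩), hyS⟩
        · exact absurd hbS hyS
        · exact ⟨hy1, hy2, hyS⟩
      · rintro ⟨hy1, hy2, hy3⟩
        exact ⟨Or.inr ⟨hy1, hy2⟩, hy3⟩
    have hA'le : (A' \ S).card ≤ h := by
      rw [hA'sd, Finset.card_erase_of_mem (Finset.mem_sdiff.mpr ⟨haA, haS⟩)]
      omega
    have hB'sd : B' \ S = insert a (B \ S) := by
      ext y
      simp only [hB', Finset.mem_sdiff, Finset.mem_insert, Finset.mem_erase]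
      constructor
      · rintro ⟨(rfl | ⟨hy1, hy2⟩), hyS⟩
        · exact Or.inl rfl
        · exact Or.inr ⟨hy2, hyS⟩
      · rintro (rfl | ⟨hy1, hy2⟩)
        · exact ⟨Or.inl rfl, haS⟩
        · exact ⟨Or.inr ⟨fun e => hy2 (e ▸ hbS), hy1⟩, hy2⟩
    have hB'le : (B' \ S).card ≤ h := by
      have : a ∉ B \ S := fun hx => haB (Finset.mem_sdiff.mp hx).1
      rw [hB'sd, Finset.card_insert_of_notMem this]
      omega
    have hA'sum : ∑ m ∈ A', x m = ∑ m ∈ A, x m - x a + x b := by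
      rw [hA', Finset.sum_insert hbA']
      have := Finset.sum_erase_add A x haA
      linarith
    have hB'sum : ∑ m ∈ B', x m = ∑ m ∈ B, x m - x b + x a := by
      rw [hB', Finset.sum_insert haB']
      have := Finset.sum_erase_add B x hbB
      linarith
    have g1 : ∑ m ∈ A', x m ≤ g h := hub h _ ⟨A', hA'card, hA'le, rfl⟩
    have g2 : ∑ m ∈ B', x m ≤ g h := hub h _ ⟨B', hB'card, hB'le, rfl⟩
    rw [hAsum, hBsum]
    linarith
end

section
/- Let G be a finite connected graph with edge weights w: E → ℝ, let S₀ be the edge set of a spanning tree of G, and for a ≥ 0 define modified weights by w_a(e) = w(e) − a if e ∈ S₀ and w_a(e) = w(e) otherwise (so that a minimum spanning tree of w_a is an α-stable MST with parameter a relative to S₀). Then for all 0 ≤ a ≤ a': (i) if e ∉ S₀ and e belongs to no minimum-total-weight spanning tree of G with respect to w_a, then e belongs to no minimum-total-weight spanning tree with respect to w_{a'}; and (ii) if e ∈ S₀ and e belongs to every minimum-total-weight spanning tree with respect to w_a, then e belongs to every minimum-total-weight spanning tree with respect to w_{a'}. Hence the stability–fit tradeoff for stable MST is monotone: sweeping a,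 each edge enters or leaves the α-stable MST at most once. -/
/-!
Spanning trees have the symmetric exchange property: if `e ∈ A \ B` for spanning trees `A`, `B`,
some `f ∈ B \ A` makes both `A - e + f` and `B - f + e` spanning trees. Let `T` be a minimum
spanning tree for `w_{a'}` containing `e ∉ S₀`, and `U` one for `w_a` avoiding `e`. Exchanging
gives `w_{a'} e ≤ w_{a'} f`, and since `e ∉ S₀` we have
`w_a e - w_a f ≤ w_{a'} e - w_{a'} f ≤ 0`, so `U - f + e` is a minimum spanning tree for `w_a`
containing `e`. The case `e ∈ S₀` is symmetric, with the roles of inclusion and exclusion swapped.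
-/

namespace SimpleGraph

variable {V : Type*} {G : SimpleGraph V}

lemma Reachable.reachable_or_reachable_deleteEdges {u v z : V} (h : G.Reachable u z) :
    (G.deleteEdges {s(u, v)}).Reachable u z ∨ (G.deleteEdges {s(u, v)}).Reachable v z := by
  rw [reachable_iff_reflTransGen] at h
  induction h with
  | refl => exact Or.inl .rfl
  | @tail b c _ hbc ih =>
    by_cases hbc_uv : s(b, c) = s(u, v)
    · rcases Sym2.eq_iff.mp hbc_uv with ⟨-, rfl⟩ | ⟨-, rfl⟩
      · exact Or.inr .rfl
      · exact Or.inl .rfl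
    · have hbc' : (G.deleteEdges {s(u, v)}).Adj b c := by simp [hbc, hbc_uv]
      exact ih.imp (·.trans hbc'.reachable) (·.trans hbc'.reachable)

lemma Walk.IsTrail.exists_boundary_edge {S : Set V} {u v : V} {p : G.Walk u v} (hp : p.IsTrail)
    (hu : u ∈ S) (hv : v ∉ S) :
    ∃ x y, G.Adj x y ∧ x ∈ S ∧ y ∉ S ∧ s(x, y) ∈ p.edges ∧
      (G.deleteEdges {s(x, y)}).Reachable u x ∧ (G.deleteEdges {s(x, y)}).Reachable y v := by
  induction p with
  | nil => exact absurd hu hv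
  | @cons a b c hab q ih =>
    rw [Walk.isTrail_cons] at hp
    by_cases hb : b ∈ S
    · obtain ⟨x, y, hxy, hx, hy, hq, hbx, hyc⟩ := ih hp.1 hb hv
      have hab' : (G.deleteEdges {s(x, y)}).Adj a b := by
        simp only [deleteEdges_adj, hab, Set.mem_singleton_iff, true_and]
        exact fun h => hp.2 (h ▸ hq)
      exact ⟨x, y, hxy, hx, hy, by simp [hq], hab'.reachable.trans hbx, hyc⟩
    · refine ⟨a, b, hab, hu, hb, by simp, .rfl, ⟨q.toDeleteEdges _ fun f hf hfab => ?_⟩⟩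
      exact hp.2 (Set.mem_singleton_iff.mp hfab ▸ hf)

lemma IsTree.deleteEdges_sup_edge {u v x y : V} (hG : G.IsTree) (huv : G.Adj u v)
    (hux : (G.deleteEdges {s(u, v)}).Reachable u x)
    (hvy : (G.deleteEdges {s(u, v)}).Reachable v y) :
    (G.deleteEdges {s(u, v)} ⊔ edge x y).IsTree := by
  set G' := G.deleteEdges {s(u, v)}
  have hbridge : ¬G'.Reachable u v := isAcyclic_iff_forall_adj_isBridge.mp hG.isAcyclic huv
  have hxy : ¬G'.Reachable x y := fun hxy => hbridge (hux.trans (hxy.trans hvy.symm))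
  refine ⟨(connected_iff_exists_forall_reachable _).2 ⟨u, fun z => ?_⟩,
    (hG.isAcyclic.anti (deleteEdges_le _)).sup_edge_of_not_reachable hxy⟩
  have hxy' : (G' ⊔ edge x y).Adj x y :=
    Or.inr ((edge_adj ..).2 ⟨Or.inl ⟨rfl, rfl⟩, fun h => hxy (h ▸ .rfl)⟩)
  rcases (hG.connected.preconnected u z).reachable_or_reachable_deleteEdges (v := v) with hz | hz
  · exact hz.mono le_sup_left
  · exact (hux.mono le_sup_left).trans
      (hxy'.reachable.trans ((hvy.symm.trans hz).mono le_sup_left))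

lemma IsTree.exists_exchange {A B : SimpleGraph V} (hA : A.IsTree) (hB : B.IsTree) {u v : V}
    (hAuv : A.Adj u v) (hBuv : ¬B.Adj u v) :
    ∃ x y, B.Adj x y ∧ ¬A.Adj x y ∧ (A.deleteEdges {s(u, v)} ⊔ edge x y).IsTree ∧
      (B.deleteEdges {s(x, y)} ⊔ edge u v).IsTree := by
  classical
  set A' := A.deleteEdges {s(u, v)}
  have hbridge : ¬A'.Reachable u v := isAcyclic_iff_forall_adj_isBridge.mp hA.isAcyclic hAuv
  -- `s(x, y)` is where the `B`-path from `u` to `v` leaves the component of `u` in `A - uv`.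
  obtain ⟨p, hp⟩ := hB.connected.exists_isPath u v
  obtain ⟨x, y, hBxy, hux, huy, -, hux', hyv'⟩ :=
    hp.isTrail.exists_boundary_edge (S := {z | A'.Reachable u z}) (u := u) .rfl hbridge
  have hvy : A'.Reachable v y :=
    ((hA.connected.preconnected u y).reachable_or_reachable_deleteEdges).resolve_left huy
  refine ⟨x, y, hBxy, fun hAxy => huy (hux.trans (Adj.reachable ?_)),
    hA.deleteEdges_sup_edge hAuv hux hvy, hB.deleteEdges_sup_edge hBxy hux'.symm hyv'⟩
  refine (deleteEdges_adj ..).2 ⟨hAxy, fun h => hBuv ?_⟩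
  rw [Set.mem_singleton_iff] at h
  rwa [← mem_edgeSet, ← h]

def IsSpanningTree (G : SimpleGraph V) (T : Finset (Sym2 V)) : Prop :=
  (T : Set (Sym2 V)) ⊆ G.edgeSet ∧ (fromEdgeSet (T : Set (Sym2 V))).IsTree

def IsMinSpanningTree {β : Type*} [AddCommMonoid β] [LE β] (G : SimpleGraph V)
    (w : Sym2 V → β) (T : Finset (Sym2 V)) : Prop :=
  G.IsSpanningTree T ∧ ∀ T', G.IsSpanningTree T' → ∑ f ∈ T, w f ≤ ∑ f ∈ T', w f

lemma IsSpanningTree.exists_isMinSpanningTree {β : Type*} [AddCommMonoid β] [LinearOrder β]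
    [Finite V] {T : Finset (Sym2 V)} (hT : G.IsSpanningTree T) (w : Sym2 V → β) :
    ∃ U, G.IsMinSpanningTree w U := by
  obtain ⟨U, hU, hmin⟩ := Set.exists_min_image {T | G.IsSpanningTree T} (fun T => ∑ f ∈ T, w f)
    (Set.toFinite _) ⟨T, hT⟩
  exact ⟨U, hU, hmin⟩

section Exchange

variable [DecidableEq V]

lemma fromEdgeSet_insert_erase (T : Finset (Sym2 V)) (e : Sym2 V) (x y : V) :
    fromEdgeSet ↑(insert s(x, y) (T.erase e)) = (fromEdgeSet ↑T).deleteEdges {e} ⊔ edge x y := by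
  ext a b
  simp only [Finset.coe_insert, Finset.coe_erase, fromEdgeSet_adj, Set.mem_insert_iff,
    Set.mem_sdiff, Finset.mem_coe, Set.mem_singleton_iff, sup_adj, deleteEdges_adj, edge_adj,
    Sym2.eq_iff]
  tauto

lemma coe_insert_erase_subset_edgeSet {S : Finset (Sym2 V)} {f : Sym2 V}
    (hS : (S : Set (Sym2 V)) ⊆ G.edgeSet) (hf : f ∈ G.edgeSet) (g : Sym2 V) :
    (↑(insert f (S.erase g)) : Set (Sym2 V)) ⊆ G.edgeSet := by
  rw [Finset.coe_insert]
  exact Set.insert_subset hf ((Finset.coe_subset.2 (Finset.erase_subset _ _)).trans hS)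

lemma IsSpanningTree.exists_exchange {A B : Finset (Sym2 V)} {e : Sym2 V}
    (hA : G.IsSpanningTree A) (hB : G.IsSpanningTree B) (heA : e ∈ A) (heB : e ∉ B) :
    ∃ f ∈ B, f ∉ A ∧ G.IsSpanningTree (insert f (A.erase e)) ∧
      G.IsSpanningTree (insert e (B.erase f)) := by
  induction e with | h u v
  have hAuv : (fromEdgeSet ↑A).Adj u v := (fromEdgeSet_adj _).2 ⟨heA, (hA.1 heA).ne⟩
  have hBuv : ¬(fromEdgeSet ↑B).Adj u v := fun h => heB ((fromEdgeSet_adj _).1 h).1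
  obtain ⟨x, y, hBxy, hAxy, hA', hB'⟩ := hA.2.exists_exchange hB.2 hAuv hBuv
  have hxyB : s(x, y) ∈ B := ((fromEdgeSet_adj _).1 hBxy).1
  refine ⟨s(x, y), hxyB, fun h => hAxy ((fromEdgeSet_adj _).2 ⟨h, hBxy.ne⟩),
    ⟨coe_insert_erase_subset_edgeSet hA.1 (hB.1 hxyB) _, ?_⟩,
    ⟨coe_insert_erase_subset_edgeSet hB.1 (hA.1 heA) _, ?_⟩⟩
  · rwa [fromEdgeSet_insert_erase]
  · rwa [fromEdgeSet_insert_erase]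

variable {β : Type*} [AddCommGroup β]

lemma sum_insert_erase (w : Sym2 V → β) {T : Finset (Sym2 V)} {e f : Sym2 V} (he : e ∈ T)
    (hf : f ∉ T) : ∑ g ∈ insert f (T.erase e), w g = ∑ g ∈ T, w g - w e + w f := by
  rw [Finset.sum_insert (fun h => hf (Finset.mem_of_mem_erase h)), ← Finset.sum_erase_add _ _ he]
  abel

variable [LinearOrder β] [IsOrderedAddMonoid β]

lemma IsMinSpanningTree.le_of_exchange {w : Sym2 V → β} {T : Finset (Sym2 V)} {e f : Sym2 V}
    (hT : G.IsMinSpanningTree w T) (he : e ∈ T) (hf : f ∉ T)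
    (hTef : G.IsSpanningTree (insert f (T.erase e))) : w e ≤ w f := by
  have := hT.2 _ hTef
  rwa [sum_insert_erase w he hf, sub_add_eq_add_sub, le_sub_iff_add_le,
    add_le_add_iff_left] at this

lemma IsMinSpanningTree.exchange {w : Sym2 V → β} {T : Finset (Sym2 V)} {e f : Sym2 V}
    (hT : G.IsMinSpanningTree w T) (he : e ∈ T) (hf : f ∉ T)
    (hTef : G.IsSpanningTree (insert f (T.erase e))) (hfe : w f ≤ w e) :
    G.IsMinSpanningTree w (insert f (T.erase e)) := by
  refine ⟨hTef, fun T' hT' => ?_⟩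
  calc ∑ g ∈ insert f (T.erase e), w g = ∑ g ∈ T, w g - w e + w f := sum_insert_erase w he hf
    _ ≤ ∑ g ∈ T, w g := by rwa [sub_add_eq_add_sub, sub_le_iff_le_add, add_le_add_iff_left]
    _ ≤ ∑ g ∈ T', w g := hT.2 T' hT'

variable [Finite V] {w w' : Sym2 V → β} {T : Finset (Sym2 V)} {e : Sym2 V}

lemma IsMinSpanningTree.exists_mem_of_sub_le (hT : G.IsMinSpanningTree w' T) (he : e ∈ T)
    (hw : ∀ f, w e - w f ≤ w' e - w' f) : ∃ U, G.IsMinSpanningTree w U ∧ e ∈ U := by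
  obtain ⟨U, hU⟩ := hT.1.exists_isMinSpanningTree w
  by_cases heU : e ∈ U
  · exact ⟨U, hU, heU⟩
  obtain ⟨f, hfU, hfT, hTef, hUfe⟩ := hT.1.exists_exchange hU.1 he heU
  have hwf : w e ≤ w f :=
    sub_nonpos.1 ((hw f).trans (sub_nonpos.2 (hT.le_of_exchange he hfT hTef)))
  exact ⟨_, hU.exchange hfU heU hUfe hwf, Finset.mem_insert_self e _⟩

lemma IsMinSpanningTree.exists_notMem_of_sub_le (hT : G.IsMinSpanningTree w' T) (he : e ∉ T)
    (hw : ∀ f, w f - w e ≤ w' f - w' e) : ∃ U, G.IsMinSpanningTree w U ∧ e ∉ U := by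
  obtain ⟨U, hU⟩ := hT.1.exists_isMinSpanningTree w
  by_cases heU : e ∈ U
  swap
  · exact ⟨U, hU, heU⟩
  obtain ⟨f, hfT, hfU, hUef, hTfe⟩ := hU.1.exists_exchange hT.1 heU he
  have hwf : w f ≤ w e :=
    sub_nonpos.1 ((hw f).trans (sub_nonpos.2 (hT.le_of_exchange hfT he hTfe)))
  refine ⟨_, hU.exchange heU hfU hUef hwf, ?_⟩
  rw [Finset.mem_insert, not_or]
  exact ⟨fun h => hfU (h ▸ heU), Finset.notMem_erase e U⟩

end Exchange

end SimpleGraph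

theorem stable_mst_monotone_general {V : Type*} [Fintype V] [DecidableEq V]
    (G : SimpleGraph V) (w : Sym2 V → ℝ)
    (S₀ : Finset (Sym2 V))
    (e : Sym2 V) (a a' : ℝ) (haa' : a ≤ a') :
    let wa : ℝ → Sym2 V → ℝ := fun b f => w f - (if f ∈ S₀ then b else 0)
    let IsMinST : ℝ → Finset (Sym2 V) → Prop := fun b T =>
      ((T : Set (Sym2 V)) ⊆ G.edgeSet ∧ (SimpleGraph.fromEdgeSet (T : Set (Sym2 V))).IsTree) ∧
      ∀ T' : Finset (Sym2 V),
        ((T' : Set (Sym2 V)) ⊆ G.edgeSet ∧ (SimpleGraph.fromEdgeSet (T' : Set (Sym2 V))).IsTree) →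
        ∑ f ∈ T, wa b f ≤ ∑ f ∈ T', wa b f
    (e ∉ S₀ → (∀ T, IsMinST a T → e ∉ T) → ∀ T, IsMinST a' T → e ∉ T) ∧
    (e ∈ S₀ → (∀ T, IsMinST a T → e ∈ T) → ∀ T, IsMinST a' T → e ∈ T) := by
  intro wa _
  refine ⟨fun heS hmin T hT heT => ?_, fun heS hmin T hT => by_contra fun heT => ?_⟩
  · obtain ⟨U, hU, heU⟩ :=
      SimpleGraph.IsMinSpanningTree.exists_mem_of_sub_le (w := wa a) hT heT fun f => by
        simp only [wa, heS, if_false]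
        split_ifs <;> linarith
    exact hmin U hU heU
  · obtain ⟨U, hU, heU⟩ :=
      SimpleGraph.IsMinSpanningTree.exists_notMem_of_sub_le (w := wa a) hT heT fun f => by
        simp only [wa, heS, if_true]
        split_ifs <;> linarith
    exact heU (hmin U hU)

/-- **The stability–fit tradeoff for stable MST is monotone.**
Let `G` be a finite connected graph with edge weights `w`, let `S₀` be the edge set of a
spanning tree, and for `b ≥ 0` let `w_b e = w e - b` for `e ∈ S₀` and `w_b e = w e`
otherwise.  Then for `0 ≤ a ≤ a'`: an edge `e ∉ S₀` excluded from every minimum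
spanning tree w.r.t. `w_a` is excluded from every minimum spanning tree w.r.t. `w_{a'}`,
and an edge `e ∈ S₀` included in every minimum spanning tree w.r.t. `w_a` is included in
every minimum spanning tree w.r.t. `w_{a'}`. -/
theorem stable_mst_monotone {V : Type*} [Fintype V] [DecidableEq V]
    (G : SimpleGraph V) (hG : G.Connected) (w : Sym2 V → ℝ)
    (S₀ : Finset (Sym2 V)) (hS₀sub : (S₀ : Set (Sym2 V)) ⊆ G.edgeSet)
    (hS₀tree : (SimpleGraph.fromEdgeSet (S₀ : Set (Sym2 V))).IsTree)
    (e : Sym2 V) (a a' : ℝ) (ha : 0 ≤ a) (haa' : a ≤ a') :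
    let wa : ℝ → Sym2 V → ℝ := fun b f => w f - (if f ∈ S₀ then b else 0)
    let IsMinST : ℝ → Finset (Sym2 V) → Prop := fun b T =>
      ((T : Set (Sym2 V)) ⊆ G.edgeSet ∧ (SimpleGraph.fromEdgeSet (T : Set (Sym2 V))).IsTree) ∧
      ∀ T' : Finset (Sym2 V),
        ((T' : Set (Sym2 V)) ⊆ G.edgeSet ∧ (SimpleGraph.fromEdgeSet (T' : Set (Sym2 V))).IsTree) →
        ∑ f ∈ T, wa b f ≤ ∑ f ∈ T', wa b f
    (e ∉ S₀ → (∀ T, IsMinST a T → e ∉ T) → ∀ T, IsMinST a' T → e ∉ T) ∧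
    (e ∈ S₀ → (∀ T, IsMinST a T → e ∈ T) → ∀ T, IsMinST a' T → e ∈ T) :=
  stable_mst_monotone_general G w S₀ e a a' haa'
end

section
/- The stability–fit tradeoff of the stable assignment problem is not monotone. Precisely, there exist n, edge weights x on the complete bipartite graph K_{n,n}, a perfect matching S₀, an edge e ∈ S₀, and parameters 0 ≤ a₁ < a₂ < a₃ such that, defining modified weights y_a(e') = x(e') + a for e' ∈ S₀ and y_a(e') = x(e') for e' ∉ S₀, the edge e belongs to every maximum-y_{a₂}-weight perfect matching, but e belongs to no maximum-y_{a₁}-weight perfect matching and to no maximum-y_{a₃}-weight perfect matching. (Such an instance exists already with n = 5.) -/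
/-!
The shifted weight of a fixed matching is affine in `a`, with slope the number of edges it
shares with `S₀`. On `K_{5,5}` with `S₀` the identity matching, choose weights for which three
matchings are optimal in turn: `(0 1)(2 4)` of weight `18 + a`, which avoids the edge `(0, 0)`;
the `3`-cycle `(1 2 4)` of weight `17 + 2a`, which contains it; and `(0 1)` of weight `14 + 3a`,
which avoids it again. The middle line is strictly on top of the upper envelope exactly on
`(1, 3)`, so at `a = 0, 2, 4` the edge `(0, 0)` is out, in, out of every optimum. Optimality
among the `120` matchings is checked by evaluation.
-/

open Equiv

def shiftedWeight {ι R : Type*} [Fintype ι] [DecidableEq ι] [AddCommMonoid R]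
    (x : ι → ι → R) (σ₀ : Perm ι) (a : R) (σ : Perm ι) : R :=
  ∑ i, (x i (σ i) + if σ i = σ₀ i then a else 0)

theorem map_shiftedWeight {ι R S : Type*} [Fintype ι] [DecidableEq ι] [AddCommMonoid R]
    [AddCommMonoid S] (f : R →+ S) (x : ι → ι → R) (σ₀ : Perm ι) (a : R) (σ : Perm ι) :
    f (shiftedWeight x σ₀ a σ) = shiftedWeight (fun i j => f (x i j)) σ₀ (f a) σ := by
  simp only [shiftedWeight, map_sum, map_add, apply_ite f, map_zero]

theorem not_of_maximizes_shiftedWeight_intCast {ι : Type*} [Fintype ι] [DecidableEq ι]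
    {x : ι → ι → ℤ} {σ₀ : Perm ι} {k : ℤ} {P : Perm ι → Prop} {τ σ : Perm ι}
    (hτ : ∀ σ, P σ → shiftedWeight x σ₀ k σ < shiftedWeight x σ₀ k τ)
    (hσ : ∀ σ', shiftedWeight (fun i j => (x i j : ℝ)) σ₀ k σ' ≤
      shiftedWeight (fun i j => (x i j : ℝ)) σ₀ k σ) : ¬ P σ := by
  intro hP
  have hcast (ρ : Perm ι) : shiftedWeight (fun i j => (x i j : ℝ)) σ₀ k ρ =
      ((shiftedWeight x σ₀ k ρ : ℤ) : ℝ) := by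
    simpa using (map_shiftedWeight (Int.castAddHom ℝ) x σ₀ k ρ).symm
  have hlt : shiftedWeight (fun i j => (x i j : ℝ)) σ₀ k σ <
      shiftedWeight (fun i j => (x i j : ℝ)) σ₀ k τ := by
    rw [hcast, hcast]
    exact_mod_cast hτ σ hP
  exact (hσ τ).not_gt hlt

namespace NonmonotoneExample

def weights : Fin 5 → Fin 5 → ℤ :=
  !![-1, -1, -5, -2, -5;
      8, -1,  4, -5, -1;
     -2,  7,  4,  5,  7;
      7,  2, -2,  7,  1;
     -6,  0, -3, -4, -4]

theorem shiftedWeight_zero_lt_of_fixes_zero :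
    ∀ σ : Perm (Fin 5), σ 0 = 0 →
      shiftedWeight weights 1 0 σ < shiftedWeight weights 1 0 (swap 0 1 * swap 2 4) := by
  decide +kernel

theorem shiftedWeight_two_lt_of_moves_zero :
    ∀ σ : Perm (Fin 5), σ 0 ≠ 0 →
      shiftedWeight weights 1 2 σ < shiftedWeight weights 1 2 (swap 1 2 * swap 2 4) := by
  decide +kernel

theorem shiftedWeight_four_lt_of_fixes_zero :
    ∀ σ : Perm (Fin 5), σ 0 = 0 →
      shiftedWeight weights 1 4 σ < shiftedWeight weights 1 4 (swap 0 1) := by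
  decide +kernel

end NonmonotoneExample

open NonmonotoneExample in
/-- **The stability–fit tradeoff of stable assignment is not monotone.**
There exist an instance of the stable assignment problem on `K_{n,n}` (weights `x`,
current perfect matching `σ₀`, an edge `(i₀, σ₀ i₀)` of it) and parameters
`0 ≤ a₁ < a₂ < a₃` such that the edge belongs to every maximum-weight perfect matching
of the `a₂`-modified weights, but to no maximum-weight perfect matching of the
`a₁`-modified or `a₃`-modified weights (the modification adds `a` to each edge of
`σ₀`). -/
theorem stable_assignment_not_monotone :
    ∃ (n : ℕ) (x : Fin n → Fin n → ℝ) (σ₀ : Equiv.Perm (Fin n)) (i₀ : Fin n)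
      (a₁ a₂ a₃ : ℝ),
      0 ≤ a₁ ∧ a₁ < a₂ ∧ a₂ < a₃ ∧
      (let W : ℝ → Equiv.Perm (Fin n) → ℝ := fun a σ =>
        ∑ i, (x i (σ i) + if σ i = σ₀ i then a else 0)
      (∀ σ : Equiv.Perm (Fin n), (∀ σ', W a₂ σ' ≤ W a₂ σ) → σ i₀ = σ₀ i₀) ∧
      (∀ σ : Equiv.Perm (Fin n), (∀ σ', W a₁ σ' ≤ W a₁ σ) → σ i₀ ≠ σ₀ i₀) ∧
      (∀ σ : Equiv.Perm (Fin n), (∀ σ', W a₃ σ' ≤ W a₃ σ) → σ i₀ ≠ σ₀ i₀)) := by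
  refine ⟨5, fun i j => (weights i j : ℝ), 1, 0, 0, 2, 4, le_rfl, by norm_num, by norm_num,
    ?_, ?_, ?_⟩
  · exact fun σ hσ => not_not.1 <| not_of_maximizes_shiftedWeight_intCast (k := 2)
      shiftedWeight_two_lt_of_moves_zero (by exact_mod_cast hσ)
  · exact fun σ hσ => not_of_maximizes_shiftedWeight_intCast (k := 0)
      shiftedWeight_zero_lt_of_fixes_zero (by exact_mod_cast hσ)
  · exact fun σ hσ => not_of_maximizes_shiftedWeight_intCast (k := 4)
      shiftedWeight_four_lt_of_fixes_zero (by exact_mod_cast hσ)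
end

section
/- Let U be a finite set with element weights u: U → ℝ_{≥0}, let 𝒞 be a finite collection of subsets of U, let S ⊆ 𝒞 with |S| = k be the current output, and let a ≥ 0. Construct a modified instance by adding, for each set T ∈ S, a fresh element e_T of weight a that is contained in T and in no other set of 𝒞. Then for every F ⊆ 𝒞 with |F| = k, the total weight covered by F in the modified instance equals (the total weight covered by F in the original instance) − a·|F\S| + a·k. Consequently, F maximizes the α-stable k-cover objective (covered weight minus a·|F\S|) over k-element subfamilies of 𝒞 if and only if F is an optimal k-cover of the modified instance. -/
/-! The fresh element `e_T` is covered by `F` exactly when `T ∈ F ∩ S`, so the modified covered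
weight is `cov F + a·|F ∩ S| = cov F - a·|F \ S| + a·|F|`. On `k`-element families the modified
cover value and the α-stable objective therefore differ by the constant `a·k`, and have the same
maximizers. -/

open Finset

section

variable {ι α M : Type*} [DecidableEq ι] [DecidableEq α]

lemma biUnion_image_inl_union_tag (f : ι → Finset α) (S F : Finset ι) :
    F.biUnion (fun i => (f i).image Sum.inl ∪ (if i ∈ S then {Sum.inr i} else ∅)) =
      (F.biUnion f).disjSum (F ∩ S) := by
  ext (x | i)
  · simp [mem_ite]
  · simpa [mem_ite] using ⟨fun ⟨j, hj, hji, hjS⟩ => hji hjS ▸ ⟨hj, hjS⟩,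
      fun ⟨hi, hiS⟩ => ⟨i, hi, fun _ => rfl, hiS⟩⟩

lemma sum_biUnion_image_inl_union_tag [AddCommMonoid M] (f : ι → Finset α) (S F : Finset ι)
    (w : α → M) (a : M) :
    ∑ z ∈ F.biUnion (fun i => (f i).image Sum.inl ∪ (if i ∈ S then {Sum.inr i} else ∅)),
        Sum.elim w (fun _ => a) z =
      ∑ x ∈ F.biUnion f, w x + #(F ∩ S) • a := by
  rw [biUnion_image_inl_union_tag, sum_sumElim, sum_const]

lemma card_inter_eq_sub_card_sdiff {R : Type*} [AddGroupWithOne R] (S F : Finset ι) :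
    (#(F ∩ S) : R) = #F - #(F \ S) := by
  rw [← card_inter_add_card_sdiff F S, Nat.cast_add, add_sub_cancel_right]

end

theorem alpha_stable_k_cover_reduction_general {U : Type*} [DecidableEq U]
    (u : U → ℝ) (𝒞 : Finset (Finset U)) (k : ℕ)
    (S : Finset (Finset U))
    (a : ℝ) :
    let m : Finset U → Finset (U ⊕ Finset U) := fun T =>
      T.image Sum.inl ∪ (if T ∈ S then {Sum.inr T} else ∅)
    let u' : U ⊕ Finset U → ℝ := Sum.elim u fun _ => a
    let cov : Finset (Finset U) → ℝ := fun F => ∑ e ∈ F.biUnion id, u e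
    let cov' : Finset (Finset U) → ℝ := fun F => ∑ z ∈ F.biUnion m, u' z
    (∀ F ⊆ 𝒞, F.card = k →
      cov' F = cov F - a * ((F \ S).card : ℝ) + a * (k : ℝ)) ∧
    (∀ F ⊆ 𝒞, F.card = k →
      ((∀ F' ⊆ 𝒞, F'.card = k →
          cov F' - a * ((F' \ S).card : ℝ) ≤ cov F - a * ((F \ S).card : ℝ)) ↔
        (∀ F' ⊆ 𝒞, F'.card = k → cov' F' ≤ cov' F))) := by
  intro m u' cov cov'
  have modified_cov : ∀ F : Finset (Finset U), #F = k →
      cov' F = cov F - a * #(F \ S) + a * k := by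
    intro F hF
    calc cov' F = cov F + #(F ∩ S) • a := sum_biUnion_image_inl_union_tag id S F u a
      _ = cov F - a * #(F \ S) + a * k := by
        rw [nsmul_eq_mul, card_inter_eq_sub_card_sdiff (R := ℝ), hF]
        ring
  refine ⟨fun F _ hF => modified_cov F hF, fun F _ hF => ?_⟩
  refine forall₂_congr fun F' _ => forall_congr' fun hF' => ?_
  rw [modified_cov F' hF', modified_cov F hF, add_le_add_iff_right]

/-- **Reduction of α-stable k-set cover to optimal k-set cover on a modified instance.**
Add to each set `T` of the current output `S` a fresh element (modelled as `Sum.inr T`)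
of weight `a` belonging to `T` only.  Then for every `k`-element `F ⊆ 𝒞`, the covered
weight in the modified instance equals the originally covered weight minus
`a * |F \ S|` plus `a * k`; consequently `F` maximizes the α-stable objective over
`k`-element subfamilies of `𝒞` iff it is an optimal `k`-cover of the modified
instance. -/
theorem alpha_stable_k_cover_reduction {U : Type*} [Fintype U] [DecidableEq U]
    (u : U → ℝ) (hu : ∀ e, 0 ≤ u e) (𝒞 : Finset (Finset U)) (k : ℕ)
    (S : Finset (Finset U)) (hS𝒞 : S ⊆ 𝒞) (hSk : S.card = k)
    (a : ℝ) (ha : 0 ≤ a) :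
    let m : Finset U → Finset (U ⊕ Finset U) := fun T =>
      T.image Sum.inl ∪ (if T ∈ S then {Sum.inr T} else ∅)
    let u' : U ⊕ Finset U → ℝ := Sum.elim u fun _ => a
    let cov : Finset (Finset U) → ℝ := fun F => ∑ e ∈ F.biUnion id, u e
    let cov' : Finset (Finset U) → ℝ := fun F => ∑ z ∈ F.biUnion m, u' z
    (∀ F ⊆ 𝒞, F.card = k →
      cov' F = cov F - a * ((F \ S).card : ℝ) + a * (k : ℝ)) ∧
    (∀ F ⊆ 𝒞, F.card = k →
      ((∀ F' ⊆ 𝒞, F'.card = k →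
          cov F' - a * ((F' \ S).card : ℝ) ≤ cov F - a * ((F \ S).card : ℝ)) ↔
        (∀ F' ⊆ 𝒞, F'.card = k → cov' F' ≤ cov' F))) :=
  alpha_stable_k_cover_reduction_general u 𝒞 k S a
end

section
/- Let (M, dist) be a metric space, let P ⊆ M be a nonempty finite set of points, let F ⊆ M be a finite set of fixed centers, and let s ≥ 1 be an integer. Then there exists a set C ⊆ P with |C| ≤ s such that for every p ∈ P the distance from p to the nearest point of C ∪ F is at most twice the optimum: max_{p∈P} min_{c ∈ C∪F} dist(p,c) ≤ 2 · inf { max_{p∈P} min_{c ∈ C'∪F} dist(p,c) : C' ⊆ M, |C'| ≤ s }. (Such a C is produced by the greedy farthest-point procedure that repeatedly adds the point of P farthest from the current set C ∪ F.) -/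
open Finset

/-- Greedy farthest-point sets: for each `n ≤ |P|` there is `C ⊆ P` with `|C| = n`
whose points are pairwise (and from `F`) at distance at least the objective of `C ∪ F`. -/
private lemma kcenter_greedy_exists {M : Type*} [MetricSpace M] [DecidableEq M]
    (P F : Finset M) (hP : P.Nonempty) :
    ∀ n, n ≤ P.card → ∃ C : Finset M, C ⊆ P ∧ C.card = n ∧
      ∀ (hne : (C ∪ F).Nonempty), ∀ x ∈ C, ∀ y ∈ C.erase x ∪ F,
        P.sup' hP (fun p => (C ∪ F).inf' hne fun c => dist p c) ≤ dist x y := by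
  intro n
  induction n with
  | zero =>
      exact fun _ => ⟨∅, by simp, by simp, fun hne x hx => absurd hx (notMem_empty x)⟩
  | succ n ih =>
      intro hn1
      obtain ⟨C, hCP, hCcard, hinv⟩ := ih (Nat.le_of_succ_le hn1)
      have hlt : C.card < P.card := by omega
      have hss : C ⊂ P := hCP.ssubset_of_ne (by rintro rfl; omega)
      obtain ⟨p₀, hp₀P, hp₀C⟩ := exists_of_ssubset hss
      by_cases hne : (C ∪ F).Nonempty
      · -- pick a farthest point (or any new point if the objective is already 0)
        obtain ⟨q, hqP, hq⟩ := P.exists_mem_eq_sup' hP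
          (fun p => (C ∪ F).inf' hne fun c => dist p c)
        have hchoice : ∃ p, p ∈ P ∧ p ∉ C ∧ ∀ y ∈ C ∪ F,
            P.sup' hP (fun p => (C ∪ F).inf' hne fun c => dist p c) ≤ dist p y := by
          by_cases hqC : q ∈ C
          · refine ⟨p₀, hp₀P, hp₀C, fun y hy => ?_⟩
            have h0 : P.sup' hP (fun p => (C ∪ F).inf' hne fun c => dist p c) ≤ 0 := by
              rw [hq]
              calc (C ∪ F).inf' hne (fun c => dist q c) ≤ dist q q :=
                    inf'_le _ (mem_union_left _ hqC)
                _ = 0 := dist_self q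
            exact h0.trans dist_nonneg
          · exact ⟨q, hqP, hqC, fun y hy => hq ▸ inf'_le _ hy⟩
        obtain ⟨p, hpP, hpC, Hp⟩ := hchoice
        refine ⟨insert p C, insert_subset hpP hCP, by rw [card_insert_of_notMem hpC, hCcard],
          ?_⟩
        intro hne1 x hx y hy
        have hsub : C ∪ F ⊆ insert p C ∪ F :=
          union_subset_union (subset_insert p C) (Subset.refl F)
        have hmono : P.sup' hP (fun z => (insert p C ∪ F).inf' hne1 fun c => dist z c) ≤
            P.sup' hP (fun z => (C ∪ F).inf' hne fun c => dist z c) := by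
          apply sup'_mono_fun
          intro z hz
          obtain ⟨c, hc, hceq⟩ := (C ∪ F).exists_mem_eq_inf' hne (fun c => dist z c)
          rw [hceq]
          exact inf'_le _ (hsub hc)
        rcases mem_insert.mp hx with rfl | hxC
        · rw [erase_insert hpC] at hy
          exact hmono.trans (Hp y hy)
        · rcases mem_union.mp hy with hyE | hyF
          · have hyx : y ≠ x := (mem_erase.mp hyE).1
            rcases mem_insert.mp (mem_erase.mp hyE).2 with rfl | hyC
            · have := Hp x (mem_union_left _ hxC)
              rw [dist_comm] at this
              exact hmono.trans this
            · exact hmono.trans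
                (hinv hne x hxC y (mem_union_left _ (mem_erase.mpr ⟨hyx, hyC⟩)))
          · exact hmono.trans (hinv hne x hxC y (mem_union_right _ hyF))
      · -- C ∪ F empty, so C = ∅ and F = ∅; take {p₀}
        have hF : F = ∅ := by
          rw [not_nonempty_iff_eq_empty, union_eq_empty] at hne
          exact hne.2
        have hC : C = ∅ := by
          rw [not_nonempty_iff_eq_empty, union_eq_empty] at hne
          exact hne.1
        have hn0 : n = 0 := by rw [hC] at hCcard; simpa using hCcard.symm
        refine ⟨{p₀}, singleton_subset_iff.mpr hp₀P, by simp [hn0], ?_⟩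
        intro hne1 x hx y hy
        rw [mem_singleton] at hx
        subst hx
        rw [hF, union_empty, erase_singleton] at hy
        exact absurd hy (notMem_empty y)

/-- **2-approximation for k-center with fixed centers.**
Given a nonempty finite point set `P` in a metric space, a finite set `F` of fixed
centers, and a budget `s ≥ 1`, there is a set `C ⊆ P` with `|C| ≤ s` such that the
`k`-center objective of `C ∪ F` is at most twice that of `C' ∪ F` for every finite
`C'` with `|C'| ≤ s` (both objectives being over nonempty center sets). -/
theorem k_center_fixed_centers_two_approx {M : Type*} [MetricSpace M] [DecidableEq M]
    (P F : Finset M) (hP : P.Nonempty) (s : ℕ) (hs : 1 ≤ s) :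
    ∃ C : Finset M, (C : Set M) ⊆ (P : Set M) ∧ C.card ≤ s ∧
      ∃ hCF : (C ∪ F).Nonempty,
        ∀ (C' : Finset M) (hC'F : (C' ∪ F).Nonempty), C'.card ≤ s →
          P.sup' hP (fun p => (C ∪ F).inf' hCF fun c => dist p c) ≤
            2 * P.sup' hP (fun p => (C' ∪ F).inf' hC'F fun c => dist p c) := by
  have hR'nonneg : ∀ (C' : Finset M) (hC'F : (C' ∪ F).Nonempty),
      0 ≤ P.sup' hP (fun p => (C' ∪ F).inf' hC'F fun c => dist p c) := by
    intro C' hC'F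
    obtain ⟨p₀, hp₀⟩ := hP
    calc (0 : ℝ) ≤ (C' ∪ F).inf' hC'F fun c => dist p₀ c :=
          le_inf' _ _ (fun b _ => dist_nonneg)
      _ ≤ _ := le_sup' (fun p => (C' ∪ F).inf' hC'F fun c => dist p c) hp₀
  by_cases hPs : P.card ≤ s
  · -- take C = P: objective is 0
    have hCF : (P ∪ F).Nonempty := hP.mono (subset_union_left)
    refine ⟨P, subset_rfl, hPs, hCF, ?_⟩
    intro C' hC'F hC'
    have h0 : P.sup' hP (fun p => (P ∪ F).inf' hCF fun c => dist p c) ≤ 0 := by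
      apply sup'_le
      intro p hp
      calc (P ∪ F).inf' hCF (fun c => dist p c) ≤ dist p p :=
            inf'_le _ (mem_union_left _ hp)
        _ = 0 := dist_self p
    nlinarith [hR'nonneg C' hC'F]
  · push_neg at hPs
    obtain ⟨C, hCP, hCcard, hinv⟩ := kcenter_greedy_exists P F hP s hPs.le
    have hCne : C.Nonempty := card_pos.mp (by omega)
    have hCF : (C ∪ F).Nonempty := hCne.mono subset_union_left
    refine ⟨C, coe_subset.mpr hCP, hCcard.le, hCF, ?_⟩
    intro C' hC'F hC'card
    set r := P.sup' hP (fun p => (C ∪ F).inf' hCF fun c => dist p c) with hr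
    set R := P.sup' hP (fun p => (C' ∪ F).inf' hC'F fun c => dist p c) with hR
    by_contra hcon
    push_neg at hcon
    have hR0 : 0 ≤ R := hR'nonneg C' hC'F
    -- the farthest point q
    obtain ⟨q, hqP, hq⟩ := P.exists_mem_eq_sup' hP
      (fun p => (C ∪ F).inf' hCF fun c => dist p c)
    have hqC : q ∉ C := by
      intro hqC
      have : r ≤ 0 := by
        rw [hr, hq]
        calc (C ∪ F).inf' hCF (fun c => dist q c) ≤ dist q q :=
              inf'_le _ (mem_union_left _ hqC)
          _ = 0 := dist_self q
      nlinarith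
    have hqfar : ∀ y ∈ C ∪ F, r ≤ dist q y := fun y hy => by
      rw [hr, hq]; exact inf'_le _ hy
    -- pairwise separation within insert q C, and from F
    have hpair : ∀ x ∈ insert q C, ∀ y ∈ insert q C, x ≠ y → r ≤ dist x y := by
      intro x hx y hy hxy
      rcases mem_insert.mp hx with rfl | hxC
      · rcases mem_insert.mp hy with rfl | hyC
        · exact absurd rfl hxy
        · exact hqfar y (mem_union_left _ hyC)
      · rcases mem_insert.mp hy with rfl | hyC
        · rw [dist_comm]; exact hqfar x (mem_union_left _ hxC)
        · exact hinv hCF x hxC y (mem_union_left _ (mem_erase.mpr ⟨hxy.symm, hyC⟩))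
    have hFfar : ∀ x ∈ insert q C, ∀ f ∈ F, r ≤ dist x f := by
      intro x hx f hf
      rcases mem_insert.mp hx with rfl | hxC
      · exact hqfar f (mem_union_right _ hf)
      · exact hinv hCF x hxC f (mem_union_right _ hf)
    -- nearest-center map into C' ∪ F
    have hgex : ∀ x : M, ∃ c, c ∈ C' ∪ F ∧
        (C' ∪ F).inf' hC'F (fun c => dist x c) = dist x c := by
      intro x
      obtain ⟨c, hc, hceq⟩ := (C' ∪ F).exists_mem_eq_inf' hC'F (fun c => dist x c)
      exact ⟨c, hc, hceq⟩
    choose g hgmem hgeq using hgex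
    have hgdist : ∀ x ∈ P, dist x (g x) ≤ R := by
      intro x hx
      rw [← hgeq x, hR]
      exact le_sup' (fun p => (C' ∪ F).inf' hC'F fun c => dist p c) hx
    have hSP : insert q C ⊆ P := insert_subset hqP hCP
    have hmaps : ∀ x ∈ insert q C, g x ∈ C' := by
      intro x hx
      rcases mem_union.mp (hgmem x) with h | h
      · exact h
      · exfalso
        have h1 : r ≤ dist x (g x) := hFfar x hx _ h
        have h2 : dist x (g x) ≤ R := hgdist x (hSP hx)
        nlinarith
    have hcard : C'.card < (insert q C).card := by
      rw [card_insert_of_notMem hqC, hCcard]; omega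
    obtain ⟨x, hx, y, hy, hxy, hgxy⟩ :=
      exists_ne_map_eq_of_card_lt_of_maps_to hcard hmaps
    have h1 : r ≤ dist x y := hpair x hx y hy hxy
    have h2 : dist x y ≤ dist x (g x) + dist (g x) y := dist_triangle _ _ _
    have h3 : dist x (g x) ≤ R := hgdist x (hSP hx)
    have h4 : dist (g x) y ≤ R := by
      rw [hgxy, dist_comm]
      exact hgdist y (hSP hy)
    nlinarith
end
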